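/- arXiv:1910.04968 — 11 statements merged into one kernel-verified Lean document; each statement's English description precedes it below -/
import Mathlib

section
/- Let U ∈ [0,1] and V ∈ {0,1,...,n} be random variables such that (i) P(U ≤ u) ≤ u for all u ∈ [0,1], (ii) for every fixed r > 0 the map u ↦ P(V ≤ r | U ≤ u) is non-decreasing in u, and (iii) V ≤ n almost surely. Then for every a ≥ 0 and c > 0, E[ 1{U ≤ cV} / (V + a) ] ≤ cn / (n + a). -/
open MeasureTheory ProbabilityTheory

section SuperUniformAux

variable {Ω : Type*}

/-- auxiliary set `{U ≤ c k}` -/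
def sA (U : Ω → ℝ) (c : ℝ) (k : ℕ) : Set Ω := {ω | U ω ≤ c * (k : ℝ)}

/-- auxiliary set `{V ≤ k} ∩ {U ≤ c k}` -/
def sC (U : Ω → ℝ) (V : Ω → ℕ) (c : ℝ) (k : ℕ) : Set Ω :=
  {ω | (V ω : ℝ) ≤ (k : ℝ)} ∩ sA U c k

/-- auxiliary set `{V = k} ∩ {U ≤ c k}` -/
def sB (U : Ω → ℝ) (V : Ω → ℕ) (c : ℝ) (k : ℕ) : Set Ω :=
  {ω | V ω = k} ∩ sA U c k

/-- conditional probability `P(V ≤ k | U ≤ c k)` as a real number -/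
noncomputable def rf [MeasurableSpace Ω] (μ : Measure Ω) (U : Ω → ℝ) (V : Ω → ℕ)
    (c : ℝ) (k : ℕ) : ℝ :=
  (μ (sC U V c k)).toReal / (μ (sA U c k)).toReal

end SuperUniformAux

/-- **Super-uniformity lemma.** -/
theorem super_uniformity_lemma
    {Ω : Type*} [MeasurableSpace Ω] (μ : Measure Ω) [IsProbabilityMeasure μ]
    (U : Ω → ℝ) (V : Ω → ℕ) (n : ℕ) (hn : 0 < n)
    (hU : Measurable U) (hV : Measurable V)
    (hUrange : ∀ ω, U ω ∈ Set.Icc (0 : ℝ) 1)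
    (hsuper : ∀ u ∈ Set.Icc (0 : ℝ) 1, μ {ω | U ω ≤ u} ≤ ENNReal.ofReal u)
    (hmono : ∀ r : ℝ, 0 < r → ∀ u₁ u₂ : ℝ, u₁ ≤ u₂ → 0 < μ {ω | U ω ≤ u₁} →
      μ ({ω | (V ω : ℝ) ≤ r} ∩ {ω | U ω ≤ u₁}) / μ {ω | U ω ≤ u₁}
        ≤ μ ({ω | (V ω : ℝ) ≤ r} ∩ {ω | U ω ≤ u₂}) / μ {ω | U ω ≤ u₂})
    (hVbound : ∀ᵐ ω ∂μ, V ω ≤ n)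
    (a c : ℝ) (ha : 0 ≤ a) (hc : 0 < c) :
    ∫ ω, (if U ω ≤ c * V ω then (1 : ℝ) / (V ω + a) else 0) ∂μ
      ≤ c * n / (n + a) := by
  -- measurability of auxiliary sets
  have hVR : Measurable fun ω => (V ω : ℝ) := measurable_from_nat.comp hV
  have hAm : ∀ k, MeasurableSet (sA U c k) := fun k => hU measurableSet_Iic
  have hVle : ∀ r : ℝ, MeasurableSet {ω | (V ω : ℝ) ≤ r} := fun r => hVR measurableSet_Iic
  have hCm : ∀ k, MeasurableSet (sC U V c k) := fun k => (hVle _).inter (hAm k)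
  have hBm : ∀ k, MeasurableSet (sB U V c k) := fun k =>
    (hV (measurableSet_singleton k)).inter (hAm k)
  have hfin : ∀ s : Set Ω, μ s ≠ ⊤ := fun s => measure_ne_top μ s
  -- the set {U ≤ 0} is null
  have hA0 : μ (sA U c 0) = 0 := by
    have h := hsuper 0 ⟨le_refl 0, zero_le_one⟩
    simp only [ENNReal.ofReal_zero] at h
    have : sA U c 0 = {ω | U ω ≤ 0} := by simp [sA]
    rw [this]
    exact le_antisymm h zero_le
  have hAsub : ∀ j k : ℕ, j ≤ k → sA U c j ⊆ sA U c k := by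
    intro j k hjk ω hw
    simp only [sA, Set.mem_setOf_eq] at hw ⊢
    have hjk' : (j : ℝ) ≤ (k : ℝ) := by exact_mod_cast hjk
    nlinarith
  have hCA : ∀ k, μ (sC U V c k) ≤ μ (sA U c k) := fun k =>
    measure_mono Set.inter_subset_right
  have hrf_nonneg : ∀ k, 0 ≤ rf μ U V c k := fun k =>
    div_nonneg ENNReal.toReal_nonneg ENNReal.toReal_nonneg
  have hrf_le_one : ∀ k, rf μ U V c k ≤ 1 := by
    intro k
    apply div_le_one_of_le₀
    · exact ENNReal.toReal_mono (hfin _) (hCA k)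
    · exact ENNReal.toReal_nonneg
  -- key monotonicity consequence
  have hkey : ∀ i : ℕ, (μ (sA U c (i + 1))).toReal * rf μ U V c i
      ≤ (μ ({ω | (V ω : ℝ) ≤ (i : ℝ)} ∩ sA U c (i + 1))).toReal := by
    intro i
    rcases Nat.eq_zero_or_pos i with h0 | hpos
    · subst h0
      have : rf μ U V c 0 = 0 := by
        rw [rf, hA0]
        simp
      rw [this, mul_zero]
      exact ENNReal.toReal_nonneg
    · by_cases hz : μ (sA U c i) = 0
      · have hc0 : μ (sC U V c i) = 0 := le_antisymm (hz ▸ hCA i) zero_le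
        have : rf μ U V c i = 0 := by rw [rf, hc0]; simp
        rw [this, mul_zero]
        exact ENNReal.toReal_nonneg
      · have hposA : 0 < μ {ω | U ω ≤ c * (i : ℝ)} := by
          exact lt_of_le_of_ne zero_le (Ne.symm hz)
        have h12 : c * (i : ℝ) ≤ c * ((i + 1 : ℕ) : ℝ) := by
          have : (i : ℝ) ≤ ((i + 1 : ℕ) : ℝ) := by push_cast; linarith
          nlinarith
        have hr : (0 : ℝ) < (i : ℝ) := by exact_mod_cast hpos
        have H := hmono (i : ℝ) hr (c * (i : ℝ)) (c * ((i + 1 : ℕ) : ℝ)) h12 hposA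
        have hw0 : μ (sA U c (i + 1)) ≠ 0 := by
          intro h
          exact hz (le_antisymm (h ▸ measure_mono (hAsub i (i + 1) (Nat.le_succ i)))
            zero_le)
        have h1 : μ (sC U V c i) / μ (sA U c i) * μ (sA U c (i + 1))
            ≤ μ ({ω | (V ω : ℝ) ≤ (i : ℝ)} ∩ sA U c (i + 1)) := by
          calc μ (sC U V c i) / μ (sA U c i) * μ (sA U c (i + 1))
              ≤ μ ({ω | (V ω : ℝ) ≤ (i : ℝ)} ∩ sA U c (i + 1)) / μ (sA U c (i + 1))
                * μ (sA U c (i + 1)) := mul_le_mul_left H _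
            _ = μ ({ω | (V ω : ℝ) ≤ (i : ℝ)} ∩ sA U c (i + 1)) :=
                ENNReal.div_mul_cancel hw0 (hfin _)
        have h2 := ENNReal.toReal_mono (hfin _) h1
        rw [ENNReal.toReal_mul, ENNReal.toReal_div] at h2
        rw [rf]
        linarith [h2]
  -- rf is monotone
  have hfmono : ∀ i : ℕ, rf μ U V c i ≤ rf μ U V c (i + 1) := by
    intro i
    by_cases hz : μ (sA U c (i + 1)) = 0
    · have hzi : μ (sA U c i) = 0 :=
        le_antisymm (le_trans (measure_mono (hAsub i (i + 1) (Nat.le_succ i))) hz.le)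
          zero_le
      have h1 : rf μ U V c i = 0 := by rw [rf, hzi]; simp
      have h2 : rf μ U V c (i + 1) = 0 := by rw [rf, hz]; simp
      rw [h1, h2]
    · have hw : 0 < (μ (sA U c (i + 1))).toReal :=
        ENNReal.toReal_pos hz (hfin _)
      have hDC : μ ({ω | (V ω : ℝ) ≤ (i : ℝ)} ∩ sA U c (i + 1)) ≤ μ (sC U V c (i + 1)) := by
        apply measure_mono
        apply Set.inter_subset_inter_left
        intro ω hw2
        simp only [Set.mem_setOf_eq] at hw2 ⊢
        push_cast
        linarith
      have h3 : (μ (sA U c (i + 1))).toReal * rf μ U V c i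
          ≤ (μ (sC U V c (i + 1))).toReal :=
        le_trans (hkey i) (ENNReal.toReal_mono (hfin _) hDC)
      have h4 : rf μ U V c i ≤ (μ (sC U V c (i + 1))).toReal
          / (μ (sA U c (i + 1))).toReal := by
        rw [le_div_iff₀ hw]
        nlinarith [h3]
      exact h4
  -- measure of A is at most ck
  have hAle : ∀ k : ℕ, (μ (sA U c k)).toReal ≤ c * (k : ℝ) := by
    intro k
    rcases le_or_gt (c * (k : ℝ)) 1 with h | h
    · have h0 : (0 : ℝ) ≤ c * (k : ℝ) := by positivity
      have := hsuper (c * (k : ℝ)) ⟨h0, h⟩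
      exact ENNReal.toReal_le_of_le_ofReal h0 this
    · have h1 : μ (sA U c k) ≤ 1 := prob_le_one
      have := ENNReal.toReal_mono (by simp) h1
      simp only [ENNReal.toReal_one] at this
      linarith
  -- per-term bound on μ(B (i+1))
  have hB_split : ∀ i : ℕ, (μ (sB U V c (i + 1))).toReal
      ≤ (μ (sA U c (i + 1))).toReal * (rf μ U V c (i + 1) - rf μ U V c i) := by
    intro i
    have hdisj : Disjoint (sB U V c (i + 1)) ({ω | (V ω : ℝ) ≤ (i : ℝ)} ∩ sA U c (i + 1)) := by
      rw [Set.disjoint_left]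
      rintro ω ⟨h1, -⟩ ⟨h2, -⟩
      simp only [Set.mem_setOf_eq] at h1 h2
      rw [h1] at h2
      push_cast at h2
      linarith
    have hsub : sB U V c (i + 1) ∪ ({ω | (V ω : ℝ) ≤ (i : ℝ)} ∩ sA U c (i + 1))
        ⊆ sC U V c (i + 1) := by
      rintro ω (⟨h1, h2⟩ | ⟨h1, h2⟩)
      · refine ⟨?_, h2⟩
        simp only [Set.mem_setOf_eq] at h1 ⊢
        rw [h1]
      · refine ⟨?_, h2⟩
        simp only [Set.mem_setOf_eq] at h1 ⊢
        push_cast at h1 ⊢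
        linarith
    have hU2 : μ (sB U V c (i + 1)) + μ ({ω | (V ω : ℝ) ≤ (i : ℝ)} ∩ sA U c (i + 1))
        ≤ μ (sC U V c (i + 1)) := by
      rw [← measure_union hdisj ((hVle _).inter (hAm _))]
      exact measure_mono hsub
    have hU3 : (μ (sB U V c (i + 1))).toReal
        + (μ ({ω | (V ω : ℝ) ≤ (i : ℝ)} ∩ sA U c (i + 1))).toReal
        ≤ (μ (sC U V c (i + 1))).toReal := by
      rw [← ENNReal.toReal_add (hfin _) (hfin _)]
      exact ENNReal.toReal_mono (hfin _) hU2
    have hCrf : (μ (sC U V c (i + 1))).toReal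
        ≤ (μ (sA U c (i + 1))).toReal * rf μ U V c (i + 1) := by
      by_cases hz : (μ (sA U c (i + 1))).toReal = 0
      · have : (μ (sC U V c (i + 1))).toReal ≤ (μ (sA U c (i + 1))).toReal :=
          ENNReal.toReal_mono (hfin _) (hCA _)
        rw [hz] at this ⊢
        simpa using this
      · rw [rf, mul_div_cancel₀ _ hz]
    have hk := hkey i
    nlinarith [hk, hU3, hCrf]
  -- rewrite the integral as a finite sum
  have hU0ae : ∀ᵐ ω ∂μ, ¬ U ω ≤ 0 := by
    rw [ae_iff]
    simp only [not_not]
    have : {ω | U ω ≤ 0} = sA U c 0 := by simp [sA]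
    rw [this]
    exact hA0
  have hint : ∫ ω, (if U ω ≤ c * V ω then (1 : ℝ) / (V ω + a) else 0) ∂μ
      = ∑ i ∈ Finset.range n,
          (μ (sB U V c (i + 1))).toReal * ((((i + 1 : ℕ) : ℝ) + a)⁻¹) := by
    have hae : (fun ω => if U ω ≤ c * V ω then (1 : ℝ) / (V ω + a) else 0)
        =ᵐ[μ] fun ω => ∑ i ∈ Finset.range n,
          Set.indicator (sB U V c (i + 1)) (fun _ => (((i + 1 : ℕ) : ℝ) + a)⁻¹) ω := by
      filter_upwards [hVbound, hU0ae] with ω hVn hU0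
      split_ifs with h
      · have hV0 : V ω ≠ 0 := by
          intro h0
          rw [h0] at h
          simp only [Nat.cast_zero, mul_zero] at h
          exact hU0 h
        obtain ⟨j, hj⟩ : ∃ j, V ω = j + 1 :=
          ⟨V ω - 1, (Nat.succ_pred_eq_of_pos (Nat.pos_of_ne_zero hV0)).symm⟩
        rw [Finset.sum_eq_single j]
        · rw [Set.indicator_of_mem]
          · rw [hj, one_div]
          · exact ⟨hj, by rw [← hj]; exact h⟩
        · intro b _ hne
          apply Set.indicator_of_notMem
          rintro ⟨h1, -⟩
          simp only [Set.mem_setOf_eq] at h1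
          exact hne (by omega)
        · intro hjn
          exact absurd (Finset.mem_range.mpr (by omega)) hjn
      · symm
        apply Finset.sum_eq_zero
        intro i _
        apply Set.indicator_of_notMem
        rintro ⟨h1, h2⟩
        simp only [Set.mem_setOf_eq] at h1 h2
        rw [← h1] at h2
        exact h h2
    rw [integral_congr_ae hae, integral_finset_sum]
    · refine Finset.sum_congr rfl fun i _ => ?_
      rw [integral_indicator_const _ (hBm (i + 1)), smul_eq_mul, Measure.real]
    · intro i _
      exact (integrable_const _).indicator (hBm (i + 1))
  rw [hint]
  -- bound the sum
  have hterm : ∀ i ∈ Finset.range n,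
      (μ (sB U V c (i + 1))).toReal * ((((i + 1 : ℕ) : ℝ) + a)⁻¹)
      ≤ (c * n / (n + a)) * (rf μ U V c (i + 1) - rf μ U V c i) := by
    intro i hi
    have hin : (i : ℕ) + 1 ≤ n := Finset.mem_range.mp hi
    set k : ℝ := ((i + 1 : ℕ) : ℝ) with hkdef
    have hk1 : (1 : ℝ) ≤ k := by rw [hkdef]; exact_mod_cast Nat.one_le_iff_ne_zero.mpr (by omega)
    have hkn : k ≤ (n : ℝ) := by rw [hkdef]; exact_mod_cast hin
    have hka : 0 < k + a := by linarith
    have hna : 0 < (n : ℝ) + a := by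
      have : (1 : ℝ) ≤ (n : ℝ) := by exact_mod_cast hn
      linarith
    have hΔ : 0 ≤ rf μ U V c (i + 1) - rf μ U V c i := by linarith [hfmono i]
    have hm1 : (μ (sB U V c (i + 1))).toReal
        ≤ c * k * (rf μ U V c (i + 1) - rf μ U V c i) := by
      have h1 := hB_split i
      have h2 : (μ (sA U c (i + 1))).toReal ≤ c * k := hAle (i + 1)
      nlinarith [ENNReal.toReal_nonneg (a := μ (sA U c (i + 1)))]
    have hfrac : c * k / (k + a) ≤ c * (n : ℝ) / ((n : ℝ) + a) := by
      rw [div_le_div_iff₀ hka hna]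
      nlinarith [mul_nonneg (mul_nonneg hc.le (sub_nonneg.mpr hkn)) ha]
    calc (μ (sB U V c (i + 1))).toReal * ((k + a)⁻¹)
        ≤ (c * k * (rf μ U V c (i + 1) - rf μ U V c i)) * ((k + a)⁻¹) := by
          apply mul_le_mul_of_nonneg_right hm1 (by positivity)
      _ = (c * k / (k + a)) * (rf μ U V c (i + 1) - rf μ U V c i) := by
          ring
      _ ≤ (c * n / (n + a)) * (rf μ U V c (i + 1) - rf μ U V c i) :=
          mul_le_mul_of_nonneg_right hfrac hΔ
  calc ∑ i ∈ Finset.range n, (μ (sB U V c (i + 1))).toReal * ((((i + 1 : ℕ) : ℝ) + a)⁻¹)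
      ≤ ∑ i ∈ Finset.range n, (c * n / (n + a)) * (rf μ U V c (i + 1) - rf μ U V c i) :=
        Finset.sum_le_sum hterm
    _ = (c * n / (n + a)) * (rf μ U V c n - rf μ U V c 0) := by
        rw [← Finset.mul_sum, Finset.sum_range_sub]
    _ ≤ (c * n / (n + a)) * 1 := by
        apply mul_le_mul_of_nonneg_left
        · linarith [hrf_le_one n, hrf_nonneg 0]
        · have hna : 0 < (n : ℝ) + a := by
            have : (1 : ℝ) ≤ (n : ℝ) := by exact_mod_cast hn
            linarith
          positivity
    _ = c * n / (n + a) := mul_one _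
end

section
/- Let α > 0, let W₀ ≤ α with W₀ ≥ 0, let (γ_t)_{t≥1} be a nonnegative sequence with Σ_{t=1}^∞ γ_t = 1, and let (R_t)_{t≥1} be nonnegative integers with R_t ≤ n_t for positive integers n_t. Define τ₁ = min{s ≥ 1 : R_s > 0} and set n_t α_t = γ_t W₀ + α Σ_{j=1}^{t−1} γ_{t−j} R_j − W₀ Σ_{j=1}^{t−1} γ_{t−j} 1{j = τ₁}. Then for every t ≥ 1, Σ_{j=1}^t α_j n_j ≤ α · max(1, Σ_{k=1}^t R_k). -/
open Finset

/-- Reindexing: `∑_{j=i+1}^{t} γ(j-i) = ∑_{u=1}^{t-i} γ u`. -/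
lemma shift_sum (γ : ℕ → ℝ) (i t : ℕ) :
    ∑ j ∈ Icc (i + 1) t, γ (j - i) = ∑ u ∈ Icc 1 (t - i), γ u := by
  apply Finset.sum_nbij' (i := fun j => j - i) (j := fun u => u + i)
  · intro a ha; simp only [mem_Icc] at *; omega
  · intro a ha; simp only [mem_Icc] at *; omega
  · intro a ha; simp only [mem_Icc] at ha; omega
  · intro a ha; simp only [mem_Icc] at ha; omega
  · intro a ha; rfl

/-- Partial sums of the `γ` sequence (from index 1) are at most 1. -/
lemma partial_le_one (γ : ℕ → ℝ) (hγ : ∀ t, 0 ≤ γ t)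
    (hγsum : ∑' t : ℕ, γ (t + 1) = 1) (m : ℕ) :
    ∑ u ∈ Icc 1 m, γ u ≤ 1 := by
  have hsummable : Summable (fun t : ℕ => γ (t + 1)) := by
    by_contra h
    rw [tsum_eq_zero_of_not_summable h] at hγsum
    norm_num at hγsum
  have h1 : ∑ u ∈ Icc 1 m, γ u = ∑ u ∈ Finset.range m, γ (u + 1) := by
    apply Finset.sum_nbij' (i := fun j => j - 1) (j := fun u => u + 1)
    · intro a ha; simp only [mem_Icc, mem_range] at *; omega
    · intro a ha; simp only [mem_Icc, mem_range] at *; omega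
    · intro a ha; simp only [mem_Icc] at ha; omega
    · intro a ha; simp only [mem_range] at ha; omega
    · intro a ha; simp only [mem_Icc] at ha; congr 1; omega
  rw [h1, ← hγsum]
  exact Summable.sum_le_tsum _ (fun i _ => hγ _) hsummable

/-- Exchange of the double sum appearing in the budget computation. -/
lemma swap_sum (γ : ℕ → ℝ) (f : ℕ → ℝ) (t : ℕ) :
    ∑ j ∈ Icc 1 t, ∑ i ∈ Icc 1 (j - 1), γ (j - i) * f i
      = ∑ i ∈ Icc 1 (t - 1), (∑ u ∈ Icc 1 (t - i), γ u) * f i := by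
  rw [Finset.sum_comm' (s' := fun i => Icc (i + 1) t) (t' := Icc 1 (t - 1))
      (f := fun j i => γ (j - i) * f i)]
  · refine Finset.sum_congr rfl fun i _ => ?_
    rw [← Finset.sum_mul, shift_sum]
  · intro j i
    simp only [mem_Icc]
    omega

open Classical in

/-- **Budget bound for Algorithm 1 (Batch_BH).**  With test levels defined by
`n_t α_t = γ_t W₀ + α Σ_{j=1}^{t−1} γ_{t−j} R_j − W₀ Σ_{j=1}^{t−1} γ_{t−j} 1{j = τ₁}`,
where `τ₁` is the first index with a rejection (the indicator term vanishing if there is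
no such index), one has `Σ_{j=1}^t α_j n_j ≤ α · max(1, Σ_{k=1}^t R_k)` for every `t ≥ 1`. -/
theorem batchBH_budget_bound
    (α W₀ : ℝ) (hα : 0 < α) (hW₀ : 0 ≤ W₀) (hWα : W₀ ≤ α)
    (γ : ℕ → ℝ) (hγ : ∀ t, 0 ≤ γ t) (hγsum : ∑' t : ℕ, γ (t + 1) = 1)
    (n : ℕ → ℕ) (hn : ∀ t, 0 < n t)
    (R : ℕ → ℕ) (hR : ∀ t, R t ≤ n t)
    (a : ℕ → ℝ)
    (ha : ∀ t, 1 ≤ t →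
      (n t : ℝ) * a t =
        γ t * W₀ + α * ∑ j ∈ Icc 1 (t - 1), γ (t - j) * (R j : ℝ)
          - W₀ * ∑ j ∈ Icc 1 (t - 1), γ (t - j) *
              (if 0 < R j ∧ ∀ s, 1 ≤ s → s < j → R s = 0 then (1 : ℝ) else 0)) :
    ∀ t, 1 ≤ t →
      ∑ j ∈ Icc 1 t, a j * (n j : ℝ) ≤ α * max 1 (∑ k ∈ Icc 1 t, (R k : ℝ)) := by
  intro t ht
  set ind : ℕ → ℝ := fun j =>
    if 0 < R j ∧ ∀ s, 1 ≤ s → s < j → R s = 0 then (1 : ℝ) else 0 with hind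
  set c : ℕ → ℝ := fun i => ∑ u ∈ Icc 1 (t - i), γ u with hc
  have hc0 : ∀ i, 0 ≤ c i := fun i => Finset.sum_nonneg fun u _ => hγ u
  have hc1 : ∀ i, c i ≤ 1 := fun i => partial_le_one γ hγ hγsum _
  -- rewrite the total sum
  have hT : ∑ j ∈ Icc 1 t, a j * (n j : ℝ)
      = W₀ * ∑ j ∈ Icc 1 t, γ j
        + α * ∑ i ∈ Icc 1 (t - 1), c i * (R i : ℝ)
        - W₀ * ∑ i ∈ Icc 1 (t - 1), c i * ind i := by
    have h1 : ∀ j ∈ Icc 1 t, a j * (n j : ℝ)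
        = γ j * W₀ + α * ∑ i ∈ Icc 1 (j - 1), γ (j - i) * (R i : ℝ)
          - W₀ * ∑ i ∈ Icc 1 (j - 1), γ (j - i) * ind i := by
      intro j hj
      simp only [mem_Icc] at hj
      rw [mul_comm]
      exact ha j hj.1
    rw [Finset.sum_congr rfl h1, Finset.sum_sub_distrib, Finset.sum_add_distrib,
      ← Finset.mul_sum, ← Finset.mul_sum, swap_sum, swap_sum, ← Finset.sum_mul,
      mul_comm (∑ j ∈ Icc 1 t, γ j) W₀]
  rw [hT]
  -- now the main case analysis
  by_cases hcase : ∃ i, 0 < R i ∧ 1 ≤ i ∧ i ≤ t - 1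
  · -- there is a rejection before time t
    obtain ⟨τ, ⟨hRτ, hτ1, hτt⟩, hτmin⟩ :
        ∃ τ, (0 < R τ ∧ 1 ≤ τ ∧ τ ≤ t - 1) ∧
          ∀ s, s < τ → ¬(0 < R s ∧ 1 ≤ s ∧ s ≤ t - 1) :=
      ⟨Nat.find hcase, Nat.find_spec hcase, fun s hs => Nat.find_min hcase hs⟩
    have hτmem : τ ∈ Icc 1 (t - 1) := by simp only [mem_Icc]; exact ⟨hτ1, hτt⟩
    -- the indicator sum collapses to c τ
    have hindsum : ∑ i ∈ Icc 1 (t - 1), c i * ind i = c τ := by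
      have hpt : ∀ i ∈ Icc 1 (t - 1), c i * ind i = if i = τ then c τ else 0 := by
        intro i hi
        simp only [mem_Icc] at hi
        by_cases hiτ : i = τ
        · subst hiτ
          have hind1 : ind i = 1 := by
            have hcond : 0 < R i ∧ ∀ s, 1 ≤ s → s < i → R s = 0 :=
              ⟨hRτ, fun s hs1 hsτ => by
                by_contra hne
                exact hτmin s hsτ ⟨Nat.pos_of_ne_zero hne, hs1, by omega⟩⟩
            simp only [hind]
            rw [if_pos hcond]
          simp [hind1]
        · have hind0 : ind i = 0 := by
            simp only [hind, ite_eq_right_iff]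
            rintro ⟨hRi, hall⟩
            rcases Nat.lt_or_ge i τ with h | h
            · exact absurd ⟨hRi, hi.1, hi.2⟩ (hτmin i h)
            · have hlt : τ < i := lt_of_le_of_ne h (Ne.symm hiτ)
              exact absurd (hall τ hτ1 hlt) (by omega)
          simp [hind0, hiτ]
      rw [Finset.sum_congr rfl hpt, Finset.sum_ite_eq' (Icc 1 (t-1)) τ (fun _ => c τ)]
      simp [hτmem]
    rw [hindsum]
    -- R τ ≥ 1, so the max is the sum of rejections
    have hτmem' : τ ∈ Icc 1 t := by simp only [mem_Icc]; omega
    have hRτ1 : (1 : ℝ) ≤ (R τ : ℝ) := by exact_mod_cast hRτ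
    have hsumR : (R τ : ℝ) ≤ ∑ k ∈ Icc 1 t, (R k : ℝ) :=
      Finset.single_le_sum (f := fun k => (R k : ℝ)) (fun k _ => by positivity) hτmem'
    have hmax : max 1 (∑ k ∈ Icc 1 t, (R k : ℝ)) = ∑ k ∈ Icc 1 t, (R k : ℝ) :=
      max_eq_right (le_trans hRτ1 hsumR)
    rw [hmax]
    -- split off the τ term
    have hsplit : ∑ i ∈ Icc 1 (t - 1), c i * (R i : ℝ)
        = c τ * (R τ : ℝ) + ∑ i ∈ (Icc 1 (t - 1)).erase τ, c i * (R i : ℝ) :=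
      (Finset.add_sum_erase _ _ hτmem).symm
    have hbound : ∑ i ∈ (Icc 1 (t - 1)).erase τ, c i * (R i : ℝ)
        ≤ ∑ i ∈ (Icc 1 (t - 1)).erase τ, (R i : ℝ) :=
      Finset.sum_le_sum fun i _ => by
        have : (0:ℝ) ≤ (R i : ℝ) := by positivity
        nlinarith [hc0 i, hc1 i]
    have hsub : ∑ i ∈ (Icc 1 (t - 1)).erase τ, (R i : ℝ) + (R τ : ℝ)
        ≤ ∑ k ∈ Icc 1 t, (R k : ℝ) := by
      rw [add_comm, Finset.add_sum_erase _ (fun k => (R k : ℝ)) hτmem]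
      exact Finset.sum_le_sum_of_subset_of_nonneg
        (Finset.Icc_subset_Icc_right (by omega)) (fun k _ _ => by positivity)
    have hS1 : ∑ j ∈ Icc 1 t, γ j ≤ 1 := partial_le_one γ hγ hγsum t
    have hS0 : 0 ≤ ∑ j ∈ Icc 1 t, γ j := Finset.sum_nonneg fun u _ => hγ u
    set E := ∑ i ∈ (Icc 1 (t - 1)).erase τ, (R i : ℝ)
    have hE0 : 0 ≤ E := Finset.sum_nonneg fun i _ => by positivity
    rw [hsplit]
    nlinarith [hc0 τ, hc1 τ, mul_nonneg (sub_nonneg.2 hWα) (mul_nonneg (sub_nonneg.2 (hc1 τ)) (le_trans zero_le_one hRτ1)),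
      mul_nonneg hW₀ (mul_nonneg (sub_nonneg.2 (hc1 τ)) (sub_nonneg.2 hRτ1)),
      mul_nonneg hW₀ (sub_nonneg.2 hS1)]
  · -- no rejection before time t
    push_neg at hcase
    have hR0 : ∀ i ∈ Icc 1 (t - 1), R i = 0 := by
      intro i hi
      simp only [mem_Icc] at hi
      by_contra h
      exact absurd (hcase i (Nat.pos_of_ne_zero h) hi.1) (by omega)
    have h1 : ∑ i ∈ Icc 1 (t - 1), c i * (R i : ℝ) = 0 :=
      Finset.sum_eq_zero fun i hi => by rw [hR0 i hi]; simp
    have h2 : ∑ i ∈ Icc 1 (t - 1), c i * ind i = 0 := by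
      refine Finset.sum_eq_zero fun i hi => ?_
      have hind0 : ind i = 0 := by
        simp only [hind, ite_eq_right_iff]
        rintro ⟨hRi, -⟩
        have := hR0 i hi
        omega
      rw [hind0, mul_zero]
    rw [h1, h2]
    have hS1 : ∑ j ∈ Icc 1 t, γ j ≤ 1 := partial_le_one γ hγ hγsum t
    have hmax : (1:ℝ) ≤ max 1 (∑ k ∈ Icc 1 t, (R k : ℝ)) := le_max_left _ _
    nlinarith [Finset.sum_nonneg (fun u (_ : u ∈ Icc 1 t) => hγ u)]
end

section
/- With the setup of the Batch_BH update in Algorithm 1 (test levels α_t defined by n_t α_t = γ_t W₀ + α Σ_{j<t} γ_{t−j} R_j − W₀ Σ_{j<t} γ_{t−j} 1{j=τ₁}, where τ₁ is the first index with R_{τ₁} > 0), the FDP estimate satisfies FDP̂(t) := Σ_{j=1}^t α_j · R_j⁺ / (R_j⁺ + Σ_{k≤t, k≠j} R_k) ≤ α for all t, where R_j⁺ is any quantity with R_j ≤ R_j⁺ ≤ n_j. -/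
open Finset
open Classical in

/-- **FDP-estimate control for Algorithm 1 (Batch_BH).**  With test levels defined by
`n_t α_t = γ_t W₀ + α Σ_{j<t} γ_{t−j} R_j − W₀ Σ_{j<t} γ_{t−j} 1{j=τ₁}` (with `τ₁` the first
index with `R_{τ₁} > 0`), the FDP estimate
`FDP̂(t) = Σ_{j=1}^t α_j R_j⁺/(R_j⁺ + Σ_{k≤t, k≠j} R_k)` is at most `α` for all `t ≥ 1`,
where `R_j⁺` is any quantity with `R_j ≤ R_j⁺ ≤ n_j`. -/
theorem batchBH_fdp_control
    (α W₀ : ℝ) (hα : 0 < α) (hW₀ : 0 ≤ W₀) (hWα : W₀ ≤ α)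
    (γ : ℕ → ℝ) (hγ : ∀ t, 0 ≤ γ t) (hγsum : ∑' t : ℕ, γ (t + 1) = 1)
    (n : ℕ → ℕ) (hn : ∀ t, 0 < n t)
    (R Rplus : ℕ → ℕ) (hRp : ∀ t, R t ≤ Rplus t) (hpn : ∀ t, Rplus t ≤ n t)
    (a : ℕ → ℝ)
    (ha : ∀ t, 1 ≤ t →
      (n t : ℝ) * a t =
        γ t * W₀ + α * ∑ j ∈ Icc 1 (t - 1), γ (t - j) * (R j : ℝ)
          - W₀ * ∑ j ∈ Icc 1 (t - 1), γ (t - j) *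
              (if 0 < R j ∧ ∀ s, 1 ≤ s → s < j → R s = 0 then (1 : ℝ) else 0)) :
    ∀ t, 1 ≤ t →
      ∑ j ∈ Icc 1 t,
          a j * ((Rplus j : ℝ) / ((Rplus j : ℝ) + ∑ k ∈ (Icc 1 t).erase j, (R k : ℝ)))
        ≤ α := by
  -- partial sums of γ are at most 1
  have hsummable : Summable (fun k : ℕ => γ (k + 1)) := by
    by_contra h
    rw [tsum_eq_zero_of_not_summable h] at hγsum
    exact one_ne_zero hγsum.symm
  have hpartial : ∀ m : ℕ, ∑ j ∈ Icc 1 m, γ j ≤ 1 := by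
    intro m
    have h1 : ∑ j ∈ Icc 1 m, γ j = ∑ i ∈ range m, γ (i + 1) := by
      rw [← Finset.Ico_add_one_right_eq_Icc, Finset.sum_Ico_eq_sum_range]
      simp [add_comm]
    rw [h1, ← hγsum]
    exact Summable.sum_le_tsum (range m) (fun i _ => hγ _) hsummable
  intro t ht
  by_cases hS0 : ∀ k ∈ Icc 1 t, R k = 0
  · -- trivial case: no rejections in [1, t]
    have haj : ∀ j ∈ Icc 1 t, a j = γ j * W₀ / (n j : ℝ) := by
      intro j hj
      rw [mem_Icc] at hj
      have h := ha j hj.1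
      have hz : ∀ i ∈ Icc 1 (j - 1), R i = 0 := by
        intro i hi
        rw [mem_Icc] at hi
        exact hS0 i (mem_Icc.mpr ⟨hi.1, by omega⟩)
      have h2 : ∑ i ∈ Icc 1 (j - 1), γ (j - i) * (R i : ℝ) = 0 :=
        Finset.sum_eq_zero fun i hi => by rw [hz i hi]; simp
      have h3 : ∑ i ∈ Icc 1 (j - 1), γ (j - i) *
          (if 0 < R i ∧ ∀ s, 1 ≤ s → s < i → R s = 0 then (1 : ℝ) else 0) = 0 :=
        Finset.sum_eq_zero fun i hi => by
          rw [if_neg (by rw [hz i hi]; simp)]; ring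
      rw [h2, h3] at h
      have hnj : (0 : ℝ) < (n j : ℝ) := by exact_mod_cast hn j
      field_simp
      linarith
    calc ∑ j ∈ Icc 1 t,
        a j * ((Rplus j : ℝ) / ((Rplus j : ℝ) + ∑ k ∈ (Icc 1 t).erase j, (R k : ℝ)))
        ≤ ∑ j ∈ Icc 1 t, γ j * W₀ := by
          apply Finset.sum_le_sum
          intro j hj
          rw [haj j hj]
          have hnj : (1 : ℝ) ≤ (n j : ℝ) := by exact_mod_cast hn j
          have hga : (0 : ℝ) ≤ γ j * W₀ := mul_nonneg (hγ j) hW₀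
          have hanneg : (0 : ℝ) ≤ γ j * W₀ / (n j : ℝ) := by positivity
          have hratio : (Rplus j : ℝ) / ((Rplus j : ℝ) + ∑ k ∈ (Icc 1 t).erase j, (R k : ℝ)) ≤ 1 := by
            apply div_le_one_of_le₀
            · exact le_add_of_nonneg_right (Finset.sum_nonneg fun k _ => by positivity)
            · positivity
          calc γ j * W₀ / (n j : ℝ) *
              ((Rplus j : ℝ) / ((Rplus j : ℝ) + ∑ k ∈ (Icc 1 t).erase j, (R k : ℝ)))
              ≤ γ j * W₀ / (n j : ℝ) * 1 := mul_le_mul_of_nonneg_left hratio hanneg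
            _ = γ j * W₀ / (n j : ℝ) := mul_one _
            _ ≤ γ j * W₀ := div_le_self hga hnj
      _ = W₀ * ∑ j ∈ Icc 1 t, γ j := by rw [Finset.mul_sum]; exact Finset.sum_congr rfl fun j _ => mul_comm _ _
      _ ≤ W₀ * 1 := mul_le_mul_of_nonneg_left (hpartial t) hW₀
      _ = W₀ := mul_one _
      _ ≤ α := hWα
  · -- main case: at least one rejection in [1, t]
    push_neg at hS0
    obtain ⟨k₀, hk₀I, hk₀⟩ := hS0
    rw [mem_Icc] at hk₀I
    have hex : ∃ k, 1 ≤ k ∧ 0 < R k := ⟨k₀, hk₀I.1, Nat.pos_of_ne_zero hk₀⟩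
    set τ := Nat.find hex with hτdef
    obtain ⟨hτ1, hτR⟩ : 1 ≤ τ ∧ 0 < R τ := Nat.find_spec hex
    have hτt : τ ≤ t := le_trans (Nat.find_min' hex ⟨hk₀I.1, Nat.pos_of_ne_zero hk₀⟩) hk₀I.2
    have hmin : ∀ s, 1 ≤ s → s < τ → R s = 0 := by
      intro s h1 hlt
      have := Nat.find_min hex hlt
      omega
    -- the indicator is the indicator of {τ}
    have hind : ∀ i, 1 ≤ i →
        (if 0 < R i ∧ ∀ s, 1 ≤ s → s < i → R s = 0 then (1 : ℝ) else 0)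
          = if i = τ then 1 else 0 := by
      intro i hi
      by_cases hiτ : i = τ
      · subst hiτ
        rw [if_pos ⟨hτR, hmin⟩, if_pos rfl]
      · rw [if_neg hiτ, if_neg]
        rintro ⟨hRi, hall⟩
        have hτi : τ ≤ i := Nat.find_min' hex ⟨hi, hRi⟩
        have hlt : τ < i := lt_of_le_of_ne hτi (Ne.symm hiτ)
        have := hall τ hτ1 hlt
        omega
    set S : ℝ := ∑ k ∈ Icc 1 t, (R k : ℝ) with hSdef
    have hτmem : τ ∈ Icc 1 t := mem_Icc.mpr ⟨hτ1, hτt⟩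
    have hRτ1 : (1 : ℝ) ≤ (R τ : ℝ) := by exact_mod_cast hτR
    have hS1 : (1 : ℝ) ≤ S :=
      le_trans hRτ1 (Finset.single_le_sum (f := fun k => (R k : ℝ)) (fun i _ => by positivity) hτmem)
    have hSpos : (0 : ℝ) < S := lt_of_lt_of_le one_pos hS1
    set c : ℕ → ℝ := fun i => ∑ j ∈ Icc (i + 1) t, γ (j - i) with hcdef
    have hc0 : ∀ i, 0 ≤ c i := fun i => Finset.sum_nonneg fun j _ => hγ _
    have hc1 : ∀ i, c i ≤ 1 := by
      intro i
      by_cases hit : i ≤ t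
      · have hmap : Icc (i + 1) t = Finset.map (addRightEmbedding i) (Icc 1 (t - i)) := by
          rw [Finset.map_add_right_Icc]
          congr 1 <;> omega
        have : c i = ∑ m ∈ Icc 1 (t - i), γ m := by
          rw [hcdef]
          simp only [hmap, Finset.sum_map, addRightEmbedding_apply]
          exact Finset.sum_congr rfl fun m hm => by rw [Nat.add_sub_cancel]
        rw [this]
        exact hpartial _
      · have : Icc (i + 1) t = ∅ := by rw [Icc_eq_empty_iff]; omega
        simp [hcdef, this]
    -- rewrite a j using τ
    have haj : ∀ j, 1 ≤ j → (n j : ℝ) * a j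
        = γ j * W₀ + α * ∑ i ∈ Icc 1 (j - 1), γ (j - i) * (R i : ℝ)
            - W₀ * (if τ < j then γ (j - τ) else 0) := by
      intro j hj
      rw [ha j hj]
      congr 1
      have h1 : ∑ i ∈ Icc 1 (j - 1), γ (j - i) *
          (if 0 < R i ∧ ∀ s, 1 ≤ s → s < i → R s = 0 then (1 : ℝ) else 0)
          = ∑ i ∈ Icc 1 (j - 1), (if i = τ then γ (j - i) else 0) := by
        apply Finset.sum_congr rfl
        intro i hi
        rw [mem_Icc] at hi
        rw [hind i hi.1]
        split_ifs <;> ring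
      rw [h1, Finset.sum_ite_eq' (Icc 1 (j - 1)) τ (fun i => γ (j - i))]
      by_cases hτj : τ < j
      · rw [if_pos (mem_Icc.mpr ⟨hτ1, by omega⟩), if_pos hτj]
      · rw [if_neg (fun hm => hτj (by rw [mem_Icc] at hm; omega)), if_neg hτj]
    -- a j is nonnegative
    have hanneg : ∀ j, 1 ≤ j → 0 ≤ a j := by
      intro j hj
      have h := haj j hj
      have hsub : W₀ * (if τ < j then γ (j - τ) else 0)
          ≤ α * ∑ i ∈ Icc 1 (j - 1), γ (j - i) * (R i : ℝ) := by
        split_ifs with hτj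
        · have hmem : τ ∈ Icc 1 (j - 1) := mem_Icc.mpr ⟨hτ1, by omega⟩
          have h1 : γ (j - τ) * (R τ : ℝ) ≤ ∑ i ∈ Icc 1 (j - 1), γ (j - i) * (R i : ℝ) :=
            Finset.single_le_sum (f := fun i => γ (j - i) * (R i : ℝ))
              (fun i _ => mul_nonneg (hγ _) (by positivity)) hmem
          have hγτ := hγ (j - τ)
          nlinarith [mul_le_mul_of_nonneg_left h1 hα.le,
            mul_nonneg (sub_nonneg.2 hWα) hγτ,
            mul_nonneg (mul_nonneg hα.le hγτ) (sub_nonneg.2 hRτ1)]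
        · rw [mul_zero]
          exact mul_nonneg hα.le (Finset.sum_nonneg fun i _ => mul_nonneg (hγ _) (by positivity))
      have hnj : (0 : ℝ) < (n j : ℝ) := by exact_mod_cast hn j
      have hga : (0 : ℝ) ≤ γ j * W₀ := mul_nonneg (hγ j) hW₀
      nlinarith
    -- ratio bound
    have hratio : ∀ j ∈ Icc 1 t,
        (Rplus j : ℝ) / ((Rplus j : ℝ) + ∑ k ∈ (Icc 1 t).erase j, (R k : ℝ))
          ≤ (n j : ℝ) / S := by
      intro j hj
      have hSsplit : S = (R j : ℝ) + ∑ k ∈ (Icc 1 t).erase j, (R k : ℝ) :=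
        (Finset.add_sum_erase _ _ hj).symm
      have hSjnn : 0 ≤ ∑ k ∈ (Icc 1 t).erase j, (R k : ℝ) :=
        Finset.sum_nonneg fun k _ => by positivity
      have h1 : (R j : ℝ) ≤ (Rplus j : ℝ) := by exact_mod_cast hRp j
      have h2 : (Rplus j : ℝ) ≤ (n j : ℝ) := by exact_mod_cast hpn j
      have hRpnn : (0 : ℝ) ≤ (Rplus j : ℝ) := by positivity
      have hden : 0 < (Rplus j : ℝ) + ∑ k ∈ (Icc 1 t).erase j, (R k : ℝ) := by
        rcases Nat.eq_zero_or_pos (R j) with h | h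
        · have : (R j : ℝ) = 0 := by exact_mod_cast h
          linarith
        · have : (1 : ℝ) ≤ (R j : ℝ) := by exact_mod_cast h
          linarith
      rw [div_le_div_iff₀ hden hSpos]
      nlinarith [mul_nonneg (by linarith : (0:ℝ) ≤ (n j : ℝ) - (R j : ℝ)) hRpnn,
        mul_nonneg (by linarith : (0:ℝ) ≤ (n j : ℝ) - (Rplus j : ℝ)) hSjnn]
    -- the main bound  ∑ n j * a j ≤ α * S
    have hmain : ∑ j ∈ Icc 1 t, (n j : ℝ) * a j ≤ α * S := by
      have hrw : ∑ j ∈ Icc 1 t, (n j : ℝ) * a j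
          = W₀ * (∑ j ∈ Icc 1 t, γ j)
            + α * ∑ i ∈ Icc 1 (t - 1), (R i : ℝ) * c i - W₀ * c τ := by
        rw [Finset.sum_congr rfl (fun j hj => haj j (mem_Icc.mp hj).1),
          Finset.sum_sub_distrib, Finset.sum_add_distrib]
        congr 1
        · congr 1
          · rw [Finset.mul_sum]
            exact Finset.sum_congr rfl fun j _ => mul_comm _ _
          · rw [← Finset.mul_sum]
            congr 1
            rw [Finset.sum_comm' (s' := fun i => Icc (i + 1) t) (t' := Icc 1 (t - 1))
              (fun x y => by rw [mem_Icc, mem_Icc, mem_Icc, mem_Icc]; omega)]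
            apply Finset.sum_congr rfl
            intro i _
            rw [← Finset.sum_mul]
            exact mul_comm _ _
        · rw [← Finset.mul_sum]
          congr 1
          have hsub : Icc (τ + 1) t ⊆ Icc 1 t := Finset.Icc_subset_Icc (by omega) le_rfl
          rw [← Finset.sum_subset hsub (fun x hx hnx => by
            rw [mem_Icc] at hx
            rw [if_neg]
            intro hc
            exact hnx (mem_Icc.mpr ⟨by omega, hx.2⟩))]
          rw [hcdef]
          apply Finset.sum_congr rfl
          intro j hj
          rw [mem_Icc] at hj
          rw [if_pos (by omega)]
      have hD : ∑ i ∈ Icc 1 (t - 1), (R i : ℝ) * c i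
          ≤ (R τ : ℝ) * c τ + (S - (R τ : ℝ)) := by
        have h1 : ∑ i ∈ Icc 1 (t - 1), (R i : ℝ) * c i ≤ ∑ i ∈ Icc 1 t, (R i : ℝ) * c i :=
          Finset.sum_le_sum_of_subset_of_nonneg (Finset.Icc_subset_Icc le_rfl (by omega))
            (fun i _ _ => mul_nonneg (by positivity) (hc0 i))
        have h2 : ∑ i ∈ Icc 1 t, (R i : ℝ) * c i
            = (R τ : ℝ) * c τ + ∑ i ∈ (Icc 1 t).erase τ, (R i : ℝ) * c i :=
          (Finset.add_sum_erase _ _ hτmem).symm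
        have h3 : ∑ i ∈ (Icc 1 t).erase τ, (R i : ℝ) * c i
            ≤ ∑ i ∈ (Icc 1 t).erase τ, (R i : ℝ) :=
          Finset.sum_le_sum fun i _ =>
            mul_le_of_le_one_right (by positivity) (hc1 i)
        have h4 : S = (R τ : ℝ) + ∑ i ∈ (Icc 1 t).erase τ, (R i : ℝ) :=
          (Finset.add_sum_erase _ _ hτmem).symm
        linarith
      rw [hrw]
      have hcτ0 := hc0 τ
      have hcτ1 := hc1 τ
      have hC0 := hpartial t
      have hC0' : 0 ≤ ∑ j ∈ Icc 1 t, γ j := Finset.sum_nonneg fun j _ => hγ j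
      nlinarith [mul_nonneg (by linarith : (0:ℝ) ≤ α - W₀) (by linarith : (0:ℝ) ≤ 1 - c τ),
        mul_nonneg (mul_nonneg hα.le (by linarith : (0:ℝ) ≤ (R τ : ℝ) - 1))
          (by linarith : (0:ℝ) ≤ 1 - c τ),
        mul_le_mul_of_nonneg_left hD hα.le,
        mul_le_mul_of_nonneg_left hC0 hW₀]
    calc ∑ j ∈ Icc 1 t,
        a j * ((Rplus j : ℝ) / ((Rplus j : ℝ) + ∑ k ∈ (Icc 1 t).erase j, (R k : ℝ)))
        ≤ ∑ j ∈ Icc 1 t, a j * ((n j : ℝ) / S) :=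
          Finset.sum_le_sum fun j hj =>
            mul_le_mul_of_nonneg_left (hratio j hj) (hanneg j (mem_Icc.mp hj).1)
      _ = (∑ j ∈ Icc 1 t, (n j : ℝ) * a j) / S := by
          rw [Finset.sum_div]
          exact Finset.sum_congr rfl fun j _ => by ring
      _ ≤ α := (div_le_iff₀ hSpos).mpr hmain
end

section
/- Let M ≥ 1 and suppose n_s ≥ M for all s. Let (γ_t) be a nonnegative sequence summing to 1, and define R_s^add = min{R_s, max{R_r : r < s}} (with R_1^add = 0) and test levels n_t α_t = M γ_t α + α Σ_{s=1}^{t−1} γ_{t−s} R_s^add. Then for every t, Σ_{j=1}^t α_j n_j ≤ α ( M + min_i Σ_{k≤t, k≠i} R_k ), and consequently Σ_{j=1}^t α_j · n_j/(n_j + Σ_{k≤t,k≠j} R_k) ≤ α. -/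
open Finset

lemma radd_key (R Radd : ℕ → ℕ)
    (hRadd1 : Radd 1 = 0)
    (hRadd : ∀ s, 2 ≤ s → Radd s = min (R s) ((Icc 1 (s - 1)).sup R)) :
    ∀ m, (∑ s ∈ Icc 1 m, Radd s) + (Icc 1 m).sup R = ∑ s ∈ Icc 1 m, R s := by
  intro m
  induction m with
  | zero => simp
  | succ m ih =>
    rcases Nat.eq_zero_or_pos m with hm | hm
    · subst hm; simp [hRadd1]
    · have hins : Icc 1 (m+1) = insert (m+1) (Icc 1 m) := by
        ext x; simp [Finset.mem_insert]; omega
      have hnot : (m+1) ∉ Icc 1 m := by simp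
      have hRa : Radd (m+1) = min (R (m+1)) ((Icc 1 m).sup R) := by
        have := hRadd (m+1) (by omega)
        simpa using this
      rw [hins, Finset.sum_insert hnot, Finset.sum_insert hnot, Finset.sup_insert, hRa]
      omega

lemma radd_le (R Radd : ℕ → ℕ)
    (hRadd1 : Radd 1 = 0)
    (hRadd : ∀ s, 2 ≤ s → Radd s = min (R s) ((Icc 1 (s - 1)).sup R))
    (t : ℕ) (ht : 1 ≤ t) (i : ℕ) (hi : i ∈ Icc 1 t) :
    ∑ s ∈ Icc 1 (t-1), Radd s ≤ ∑ k ∈ (Icc 1 t).erase i, R k := by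
  have hkey := radd_key R Radd hRadd1 hRadd (t-1)
  have hmem : i ∈ Icc 1 t := hi
  rw [Finset.mem_Icc] at hmem
  have hsplit : ∑ k ∈ (Icc 1 t).erase i, R k + R i = ∑ k ∈ Icc 1 t, R k :=
    Finset.sum_erase_add _ _ hi
  have htot : ∑ k ∈ Icc 1 t, R k = ∑ k ∈ Icc 1 (t-1), R k + R t := by
    have hins : Icc 1 t = insert t (Icc 1 (t-1)) := by
      ext x; simp [Finset.mem_insert]; omega
    rw [hins, Finset.sum_insert (by simp; omega)]
    ring
  rcases eq_or_ne i t with rfl | hit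
  · omega
  · have hiR : R i ≤ (Icc 1 (t-1)).sup R :=
      Finset.le_sup (by rw [Finset.mem_Icc]; omega)
    omega

/-- **Algorithm 3 (Batch_BH with minimum batch size `M`).**  Suppose `n_s ≥ M ≥ 1` for all
`s`, let `(γ_t)` be nonnegative summing to one, let
`R_s^add = min{R_s, max{R_r : r < s}}` (with `R_1^add = 0`), and define test levels by
`n_t α_t = M γ_t α + α Σ_{s=1}^{t−1} γ_{t−s} R_s^add`.  Then for every `t ≥ 1`,
`Σ_{j=1}^t α_j n_j ≤ α (M + min_i Σ_{k≤t, k≠i} R_k)`, and consequently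
`Σ_{j=1}^t α_j n_j/(n_j + Σ_{k≤t,k≠j} R_k) ≤ α`. -/
theorem batchBH_minBatch_bound
    (α : ℝ) (hα : 0 < α)
    (M : ℕ) (hM : 1 ≤ M)
    (γ : ℕ → ℝ) (hγ : ∀ t, 0 ≤ γ t) (hγsum : ∑' t : ℕ, γ (t + 1) = 1)
    (n : ℕ → ℕ) (hnM : ∀ s, M ≤ n s)
    (R : ℕ → ℕ) (hR : ∀ s, R s ≤ n s)
    (Radd : ℕ → ℕ)
    (hRadd1 : Radd 1 = 0)
    (hRadd : ∀ s, 2 ≤ s → Radd s = min (R s) ((Icc 1 (s - 1)).sup R))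
    (a : ℕ → ℝ)
    (ha : ∀ t, 1 ≤ t →
      (n t : ℝ) * a t =
        (M : ℝ) * γ t * α + α * ∑ s ∈ Icc 1 (t - 1), γ (t - s) * (Radd s : ℝ)) :
    ∀ t, ∀ ht : 1 ≤ t,
      (∑ j ∈ Icc 1 t, a j * (n j : ℝ)
          ≤ α * ((M : ℝ) + (Icc 1 t).inf'
              (Finset.nonempty_Icc.mpr ht)
              (fun i => ∑ k ∈ (Icc 1 t).erase i, (R k : ℝ))))
      ∧ ∑ j ∈ Icc 1 t,
            a j * ((n j : ℝ) / ((n j : ℝ) + ∑ k ∈ (Icc 1 t).erase j, (R k : ℝ)))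
          ≤ α := by
  -- summability
  have hsummable : Summable (fun u : ℕ => γ (u + 1)) := by
    by_contra h
    rw [tsum_eq_zero_of_not_summable h] at hγsum
    norm_num at hγsum
  have hpartial : ∀ m : ℕ, ∑ u ∈ Finset.range m, γ (u + 1) ≤ 1 := by
    intro m
    rw [← hγsum]
    exact Summable.sum_le_tsum _ (fun i _ => hγ _) hsummable
  have hshift : ∀ s t : ℕ, s < t → ∑ j ∈ Icc (s+1) t, γ (j - s) ≤ 1 := by
    intro s t hst
    have : ∑ j ∈ Icc (s+1) t, γ (j - s) = ∑ u ∈ Finset.range (t - s), γ (u + 1) := by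
      rw [← Finset.Ico_add_one_right_eq_Icc, Finset.sum_Ico_eq_sum_range]
      apply Finset.sum_congr (by congr 1; omega)
      intro u _
      congr 1
      omega
    rw [this]; exact hpartial _
  have hIccγ : ∀ m : ℕ, ∑ j ∈ Icc 1 m, γ j ≤ 1 := by
    intro m
    have : ∑ j ∈ Icc 1 m, γ j = ∑ u ∈ Finset.range m, γ (u + 1) := by
      rw [← Finset.Ico_add_one_right_eq_Icc, Finset.sum_Ico_eq_sum_range]
      apply Finset.sum_congr (by simp)
      intro u _
      congr 1
      omega
    rw [this]; exact hpartial _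
  intro t ht
  set B : ℕ → ℝ := fun i => ∑ k ∈ (Icc 1 t).erase i, (R k : ℝ) with hB
  have hBnonneg : ∀ i, 0 ≤ B i := fun i =>
    Finset.sum_nonneg fun k _ => Nat.cast_nonneg _
  set infB : ℝ := (Icc 1 t).inf' (Finset.nonempty_Icc.mpr ht) B with hinfB
  have hinfB0 : 0 ≤ infB := by
    obtain ⟨i, hi, hieq⟩ := Finset.exists_mem_eq_inf' (Finset.nonempty_Icc.mpr ht) B
    rw [hinfB, hieq]; exact hBnonneg i
  -- key inequality
  have key1 : ∑ j ∈ Icc 1 t, a j * (n j : ℝ)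
      ≤ α * ((M : ℝ) + ∑ s ∈ Icc 1 (t-1), (Radd s : ℝ)) := by
    have hstep : ∑ j ∈ Icc 1 t, a j * (n j : ℝ)
        = (M : ℝ) * α * (∑ j ∈ Icc 1 t, γ j)
          + α * ∑ j ∈ Icc 1 t, ∑ s ∈ Icc 1 (j - 1), γ (j - s) * (Radd s : ℝ) := by
      rw [Finset.mul_sum, Finset.mul_sum, ← Finset.sum_add_distrib]
      apply Finset.sum_congr rfl
      intro j hj
      rw [Finset.mem_Icc] at hj
      have := ha j hj.1
      rw [mul_comm (a j)]
      rw [this]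
      ring
    rw [hstep]
    have hswap : ∑ j ∈ Icc 1 t, ∑ s ∈ Icc 1 (j - 1), γ (j - s) * (Radd s : ℝ)
        = ∑ s ∈ Icc 1 (t - 1), ∑ j ∈ Icc (s+1) t, γ (j - s) * (Radd s : ℝ) := by
      apply Finset.sum_comm'
      intro x y
      simp only [Finset.mem_Icc]
      omega
    rw [hswap]
    have hinner : ∑ s ∈ Icc 1 (t - 1), ∑ j ∈ Icc (s+1) t, γ (j - s) * (Radd s : ℝ)
        ≤ ∑ s ∈ Icc 1 (t - 1), (Radd s : ℝ) := by
      apply Finset.sum_le_sum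
      intro s hs
      rw [Finset.mem_Icc] at hs
      rw [← Finset.sum_mul]
      calc (∑ j ∈ Icc (s+1) t, γ (j - s)) * (Radd s : ℝ)
          ≤ 1 * (Radd s : ℝ) := by
            apply mul_le_mul_of_nonneg_right (hshift s t (by omega)) (Nat.cast_nonneg _)
        _ = (Radd s : ℝ) := one_mul _
    have hM0 : (0:ℝ) ≤ (M:ℝ) * α := by positivity
    calc (M : ℝ) * α * (∑ j ∈ Icc 1 t, γ j)
          + α * ∑ s ∈ Icc 1 (t - 1), ∑ j ∈ Icc (s+1) t, γ (j - s) * (Radd s : ℝ)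
        ≤ (M : ℝ) * α * 1 + α * ∑ s ∈ Icc 1 (t - 1), (Radd s : ℝ) := by
          apply add_le_add
          · exact mul_le_mul_of_nonneg_left (hIccγ t) hM0
          · exact mul_le_mul_of_nonneg_left hinner hα.le
      _ = α * ((M : ℝ) + ∑ s ∈ Icc 1 (t-1), (Radd s : ℝ)) := by ring
  have hRaddB : ∀ i ∈ Icc 1 t, ∑ s ∈ Icc 1 (t-1), (Radd s : ℝ) ≤ B i := by
    intro i hi
    have := radd_le R Radd hRadd1 hRadd t ht i hi
    rw [hB]
    push_cast
    exact_mod_cast Nat.cast_le.mpr this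
  have part1 : ∑ j ∈ Icc 1 t, a j * (n j : ℝ) ≤ α * ((M : ℝ) + infB) := by
    refine key1.trans ?_
    apply mul_le_mul_of_nonneg_left _ hα.le
    apply add_le_add le_rfl
    exact Finset.le_inf' _ _ hRaddB
  refine ⟨part1, ?_⟩
  -- second part
  have hT : (0:ℝ) < (M : ℝ) + infB := by
    have : (1:ℝ) ≤ (M:ℝ) := by exact_mod_cast hM
    linarith
  have hanonneg : ∀ j ∈ Icc 1 t, 0 ≤ a j := by
    intro j hj
    rw [Finset.mem_Icc] at hj
    have hpos : (0:ℝ) < (n j : ℝ) := by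
      have := hnM j; exact_mod_cast by omega
    have hnn : 0 ≤ (n j : ℝ) * a j := by
      rw [ha j hj.1]
      apply add_nonneg
      · apply mul_nonneg (mul_nonneg (Nat.cast_nonneg _) (hγ _)) hα.le
      · apply mul_nonneg hα.le
        apply Finset.sum_nonneg
        intro s _
        exact mul_nonneg (hγ _) (Nat.cast_nonneg _)
    exact nonneg_of_mul_nonneg_right hnn hpos
  have hterm : ∀ j ∈ Icc 1 t,
      a j * ((n j : ℝ) / ((n j : ℝ) + B j)) ≤ a j * ((n j : ℝ) / ((M : ℝ) + infB)) := by
    intro j hj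
    apply mul_le_mul_of_nonneg_left _ (hanonneg j hj)
    apply div_le_div_of_nonneg_left (Nat.cast_nonneg _) hT
    have h1 : (M : ℝ) ≤ (n j : ℝ) := by exact_mod_cast hnM j
    have h2 : infB ≤ B j := Finset.inf'_le _ hj
    linarith
  calc ∑ j ∈ Icc 1 t, a j * ((n j : ℝ) / ((n j : ℝ) + B j))
      ≤ ∑ j ∈ Icc 1 t, a j * ((n j : ℝ) / ((M : ℝ) + infB)) :=
        Finset.sum_le_sum hterm
    _ = (∑ j ∈ Icc 1 t, a j * (n j : ℝ)) / ((M : ℝ) + infB) := by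
        rw [Finset.sum_div]
        apply Finset.sum_congr rfl
        intro j _
        ring
    _ ≤ α * ((M : ℝ) + infB) / ((M : ℝ) + infB) := by
        gcongr
    _ = α := by field_simp
end

section
/- For any nonnegative reals R_1, ..., R_{t−1}, defining R_s^add = min{R_s, max{R_r : r < s}} for s ≥ 2 and R_1^add = 0, we have Σ_{s=1}^{t−1} R_s^add = (Σ_{s=1}^{t−1} R_s) − max_{1 ≤ s ≤ t−1} R_s = min_{1 ≤ i ≤ t−1} Σ_{k=1}^{t−1}, k≠i R_k. -/
open Finset

lemma radd_aux (R Radd : ℕ → ℝ) (hRadd1 : Radd 1 = 0) :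
    ∀ n : ℕ, ∀ hn : 1 ≤ n,
    (∀ s, ∀ hs : 2 ≤ s, s ≤ n →
      Radd s = min (R s) ((Icc 1 (s - 1)).sup' (Finset.nonempty_Icc.mpr (Nat.le_sub_of_add_le hs)) R)) →
    ∑ s ∈ Icc 1 n, Radd s
      = ∑ s ∈ Icc 1 n, R s - (Icc 1 n).sup' (Finset.nonempty_Icc.mpr hn) R := by
  intro n
  induction n with
  | zero => omega
  | succ m ih =>
    intro _ h
    rcases Nat.eq_or_lt_of_le (show 1 ≤ m + 1 by omega) with h1 | h1
    · simp [← h1, hRadd1]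
    · have hm : 1 ≤ m := by omega
      have hIcc : insert (m + 1) (Icc 1 m) = Icc 1 (m + 1) :=
        Finset.insert_Icc_right_eq_Icc_add_one (by omega)
      have hnm : (Icc 1 m).Nonempty := Finset.nonempty_Icc.mpr hm
      have hRaddm1 : Radd (m + 1) = min (R (m + 1)) ((Icc 1 m).sup' hnm R) := by
        have := h (m + 1) (by omega) le_rfl
        simpa using this
      have ihm := ih hm (fun s h2 hsm => h s h2 (by omega))
      have hsup : (Icc 1 (m + 1)).sup' (Finset.nonempty_Icc.mpr (by omega)) R
          = max (R (m + 1)) ((Icc 1 m).sup' hnm R) := by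
        rw [← Finset.sup'_congr _ hIcc (fun x _ => rfl), Finset.sup'_insert]
        exact Finset.insert_nonempty _ _
      have hsum1 : ∑ s ∈ Icc 1 (m + 1), Radd s = Radd (m + 1) + ∑ s ∈ Icc 1 m, Radd s := by
        rw [← hIcc, Finset.sum_insert (by simp)]
      have hsum2 : ∑ s ∈ Icc 1 (m + 1), R s = R (m + 1) + ∑ s ∈ Icc 1 m, R s := by
        rw [← hIcc, Finset.sum_insert (by simp)]
      have hminmax : min (R (m + 1)) ((Icc 1 m).sup' hnm R)
          + max (R (m + 1)) ((Icc 1 m).sup' hnm R)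
          = R (m + 1) + (Icc 1 m).sup' hnm R := min_add_max _ _
      rw [hsum1, hsum2, hsup, hRaddm1, ihm]
      linarith

lemma inf_sub_eq {s : Finset ℕ} (hs : s.Nonempty) (c : ℝ) (f : ℕ → ℝ) :
    s.inf' hs (fun i => c - f i) = c - s.sup' hs f := by
  apply le_antisymm
  · obtain ⟨i, hi, hif⟩ := Finset.exists_mem_eq_sup' hs f
    rw [hif]
    exact Finset.inf'_le _ hi
  · apply Finset.le_inf'
    intro i hi
    have := Finset.le_sup' f hi
    linarith

/-- **Combinatorial identity for `R^add`.**  For nonnegative reals `R_1, …, R_{t−1}`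
(with `t ≥ 2`), defining `R_s^add = min{R_s, max{R_r : r < s}}` for `s ≥ 2` and
`R_1^add = 0`, we have
`Σ_{s=1}^{t−1} R_s^add = (Σ_{s=1}^{t−1} R_s) − max_{1≤s≤t−1} R_s
 = min_{1≤i≤t−1} Σ_{k≤t−1, k≠i} R_k`. -/
theorem radd_sum_identity
    (t : ℕ) (ht : 2 ≤ t)
    (R : ℕ → ℝ) (hR : ∀ s, 0 ≤ R s)
    (Radd : ℕ → ℝ)
    (hRadd1 : Radd 1 = 0)
    (hRadd : ∀ s, ∀ hs : 2 ≤ s, s ≤ t - 1 →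
      Radd s = min (R s) ((Icc 1 (s - 1)).sup' (Finset.nonempty_Icc.mpr (by omega)) R)) :
    (∑ s ∈ Icc 1 (t - 1), Radd s
        = (∑ s ∈ Icc 1 (t - 1), R s)
            - (Icc 1 (t - 1)).sup' (Finset.nonempty_Icc.mpr (by omega)) R)
    ∧ ∑ s ∈ Icc 1 (t - 1), Radd s
        = (Icc 1 (t - 1)).inf' (Finset.nonempty_Icc.mpr (by omega))
            (fun i => ∑ k ∈ (Icc 1 (t - 1)).erase i, R k) := by
  have h1 := radd_aux R Radd hRadd1 (t - 1) (by omega) hRadd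
  refine ⟨h1, ?_⟩
  rw [h1]
  have hne : (Icc 1 (t - 1)).Nonempty := Finset.nonempty_Icc.mpr (by omega)
  rw [← inf_sub_eq hne (∑ s ∈ Icc 1 (t - 1), R s) R]
  apply Finset.inf'_congr hne rfl
  intro i hi
  rw [Finset.sum_erase_eq_sub hi]
end

section
/- Suppose test levels are defined recursively by α_1 = γ_1 α and α_{t+1} = ( Σ_{s≤t+1} γ_s α − Σ_{s≤t} α_s · R_s⁺ / (R_s⁺ + Σ_{r≤t, r≠s} R_r) ) · (n_{t+1} + Σ_{s≤t} R_s)/n_{t+1}, where (γ_s) is nonnegative with Σ_{s=1}^∞ γ_s = 1, and 0 ≤ R_s ≤ R_s⁺ ≤ n_s. Then FDP̂(t) := Σ_{s≤t} α_s R_s⁺ / (R_s⁺ + Σ_{r≤t, r≠s} R_r) ≤ α for every t ≥ 1. -/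
open Finset

/-- **Fact (default Batch_BH, Algorithm 2).**  Suppose test levels satisfy `α_1 = γ_1 α`
and the recursion
`α_{t+1} = (Σ_{s≤t+1} γ_s α − Σ_{s≤t} α_s R_s⁺/(R_s⁺ + Σ_{r≤t, r≠s} R_r))
 · (n_{t+1} + Σ_{s≤t} R_s)/n_{t+1}`,
where `(γ_s)` is nonnegative with `Σ_{s=1}^∞ γ_s = 1` and `0 ≤ R_s ≤ R_s⁺ ≤ n_s`.  Then
`FDP̂(t) = Σ_{s≤t} α_s R_s⁺/(R_s⁺ + Σ_{r≤t, r≠s} R_r) ≤ α` for every `t ≥ 1`. -/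
theorem default_batchBH_fdp_control
    (α : ℝ) (hα : 0 < α)
    (γ : ℕ → ℝ) (hγ : ∀ s, 0 ≤ γ s) (hγsum : ∑' s : ℕ, γ (s + 1) = 1)
    (n : ℕ → ℕ) (hn : ∀ t, 0 < n t)
    (R Rplus : ℕ → ℕ) (hRp : ∀ t, R t ≤ Rplus t) (hpn : ∀ t, Rplus t ≤ n t)
    (a : ℕ → ℝ)
    (ha1 : a 1 = γ 1 * α)
    (ha : ∀ t, 1 ≤ t →
      a (t + 1) =
        ((∑ s ∈ Icc 1 (t + 1), γ s * α)
            - ∑ s ∈ Icc 1 t,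
                a s * ((Rplus s : ℝ) / ((Rplus s : ℝ) + ∑ r ∈ (Icc 1 t).erase s, (R r : ℝ))))
          * (((n (t + 1) : ℝ) + ∑ s ∈ Icc 1 t, (R s : ℝ)) / (n (t + 1) : ℝ))) :
    ∀ t, 1 ≤ t →
      ∑ s ∈ Icc 1 t,
          a s * ((Rplus s : ℝ) / ((Rplus s : ℝ) + ∑ r ∈ (Icc 1 t).erase s, (R r : ℝ)))
        ≤ α := by
  -- summability of γ shifted
  have hsum : Summable fun s : ℕ => γ (s + 1) := by
    by_contra h
    rw [tsum_eq_zero_of_not_summable h] at hγsum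
    norm_num at hγsum
  have hpartial : ∀ t : ℕ, ∑ s ∈ Icc 1 t, γ s ≤ 1 := by
    intro t
    have he : ∑ s ∈ Icc 1 t, γ s = ∑ i ∈ range t, γ (i + 1) := by
      rw [← Finset.Ico_add_one_right_eq_Icc, Finset.sum_Ico_eq_sum_range]
      simp [add_comm]
    rw [he]
    exact hγsum ▸ Summable.sum_le_tsum (range t) (fun i _ => hγ _) hsum
  have ratio_mono : ∀ P S S' : ℝ, 0 ≤ P → 0 ≤ S → S ≤ S' →
      P / (P + S') ≤ P / (P + S) := by
    intro P S S' hP hS hSS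
    rcases eq_or_lt_of_le hP with h0 | h0
    · simp [← h0]
    · apply div_le_div_of_nonneg_left hP (by linarith) (by linarith)
  have ratio_le : ∀ P N D : ℝ, 0 ≤ P → P ≤ N → 0 < N → 0 ≤ D →
      P / (P + D) ≤ N / (N + D) := by
    intro P N D hP hPN hN hD
    rcases eq_or_lt_of_le hP with h0 | h0
    · rw [← h0]
      simp only [zero_div, zero_add]
      rcases eq_or_lt_of_le hD with hd0 | hd0
      · rw [← hd0, add_zero]; exact div_nonneg hN.le hN.le
      · apply div_nonneg <;> linarith
    · rw [div_le_div_iff₀ (by linarith) (by linarith)]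
      nlinarith
  have Rnn : ∀ X : Finset ℕ, (0:ℝ) ≤ ∑ r ∈ X, (R r : ℝ) :=
    fun X => Finset.sum_nonneg fun r _ => by positivity
  have key : ∀ t, 1 ≤ t →
      (∀ s ∈ Icc 1 t, 0 ≤ a s) ∧
      ∑ s ∈ Icc 1 t,
          a s * ((Rplus s : ℝ) / ((Rplus s : ℝ) + ∑ r ∈ (Icc 1 t).erase s, (R r : ℝ)))
        ≤ ∑ s ∈ Icc 1 t, γ s * α := by
    intro t ht
    induction t with
    | zero => omega
    | succ t ih =>
      rcases Nat.lt_or_ge t 1 with h1 | ht1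
      · have ht0 : t = 0 := by omega
        subst ht0
        have ha1nn : 0 ≤ a 1 := by rw [ha1]; exact mul_nonneg (hγ 1) hα.le
        constructor
        · intro s hs
          have : s = 1 := by have := Finset.mem_Icc.mp hs; omega
          rw [this]; exact ha1nn
        · have h11 : Icc 1 1 = ({1} : Finset ℕ) := Finset.Icc_self 1
          rw [h11]
          simp only [Finset.sum_singleton, Finset.erase_singleton, Finset.sum_empty, add_zero]
          have hr : (Rplus 1 : ℝ) / (Rplus 1 : ℝ) ≤ 1 := by
            rcases eq_or_ne ((Rplus 1 : ℝ)) 0 with h | h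
            · simp [h]
            · rw [div_self h]
          calc a 1 * ((Rplus 1 : ℝ) / (Rplus 1 : ℝ)) ≤ a 1 * 1 :=
                mul_le_mul_of_nonneg_left hr ha1nn
            _ = a 1 := mul_one _
            _ = γ 1 * α := ha1
      · obtain ⟨ihnn, ihsum⟩ := ih ht1
        have hins : Icc 1 (t + 1) = insert (t + 1) (Icc 1 t) := by
          ext x; simp only [Finset.mem_Icc, Finset.mem_insert]; omega
        have hnotmem : t + 1 ∉ Icc 1 t := by simp
        set D : ℝ := ∑ s ∈ Icc 1 t, (R s : ℝ) with hD
        set F : ℝ := ∑ s ∈ Icc 1 t,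
            a s * ((Rplus s : ℝ) / ((Rplus s : ℝ) + ∑ r ∈ (Icc 1 t).erase s, (R r : ℝ)))
            with hF
        set G : ℝ := ∑ s ∈ Icc 1 t, γ s * α with hG
        have hnpos : (0:ℝ) < (n (t + 1) : ℝ) := by exact_mod_cast hn (t + 1)
        have hDnn : 0 ≤ D := Rnn _
        have hGsplit : ∑ s ∈ Icc 1 (t + 1), γ s * α = γ (t + 1) * α + G := by
          rw [hins, Finset.sum_insert hnotmem]
        have hXnn : 0 ≤ ∑ s ∈ Icc 1 (t + 1), γ s * α - F := by
          rw [hGsplit]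
          have : 0 ≤ γ (t + 1) * α := mul_nonneg (hγ _) hα.le
          linarith
        have hann : 0 ≤ a (t + 1) := by
          rw [ha t ht1]
          exact mul_nonneg hXnn (div_nonneg (by linarith) hnpos.le)
        constructor
        · intro s hs
          rcases Finset.mem_Icc.mp hs with ⟨hs1, hs2⟩
          rcases Nat.lt_or_ge s (t + 1) with h | h
          · exact ihnn s (Finset.mem_Icc.mpr ⟨hs1, by omega⟩)
          · have : s = t + 1 := by omega
            rw [this]; exact hann
        · rw [hins, Finset.sum_insert hnotmem, Finset.sum_insert hnotmem,
            Finset.erase_insert hnotmem, ← hD, ← hG]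
          have h2 : ∑ s ∈ Icc 1 t,
              a s * ((Rplus s : ℝ) /
                ((Rplus s : ℝ) + ∑ r ∈ (insert (t + 1) (Icc 1 t)).erase s, (R r : ℝ)))
              ≤ F := by
            apply Finset.sum_le_sum
            intro s hs
            have hsne : (t + 1 : ℕ) ≠ s := by
              have := Finset.mem_Icc.mp hs; omega
            have herase : ∑ r ∈ (insert (t + 1) (Icc 1 t)).erase s, (R r : ℝ)
                = (R (t + 1) : ℝ) + ∑ r ∈ (Icc 1 t).erase s, (R r : ℝ) := by
              rw [Finset.erase_insert_of_ne hsne, Finset.sum_insert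
                (fun h => hnotmem (Finset.mem_of_mem_erase h))]
            rw [herase]
            apply mul_le_mul_of_nonneg_left _ (ihnn s hs)
            exact ratio_mono _ _ _ (by positivity) (Rnn _)
              (le_add_of_nonneg_left (by positivity))
          have h3 : a (t + 1) * ((Rplus (t + 1) : ℝ) / ((Rplus (t + 1) : ℝ) + D))
              ≤ γ (t + 1) * α + G - F := by
            have hr : (Rplus (t + 1) : ℝ) / ((Rplus (t + 1) : ℝ) + D)
                ≤ (n (t + 1) : ℝ) / ((n (t + 1) : ℝ) + D) :=
              ratio_le _ _ _ (by positivity)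
                (by exact_mod_cast hpn (t + 1)) hnpos hDnn
            have heq : a (t + 1) * ((n (t + 1) : ℝ) / ((n (t + 1) : ℝ) + D))
                = ∑ s ∈ Icc 1 (t + 1), γ s * α - F := by
              rw [ha t ht1]
              have hne : ((n (t + 1) : ℝ)) ≠ 0 := ne_of_gt hnpos
              have hne2 : ((n (t + 1) : ℝ) + D) ≠ 0 := by positivity
              generalize (∑ s ∈ Icc 1 (t + 1), γ s * α - F) = X
              field_simp
              rw [hD]
            calc a (t + 1) * ((Rplus (t + 1) : ℝ) / ((Rplus (t + 1) : ℝ) + D))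
                ≤ a (t + 1) * ((n (t + 1) : ℝ) / ((n (t + 1) : ℝ) + D)) :=
                  mul_le_mul_of_nonneg_left hr hann
              _ = ∑ s ∈ Icc 1 (t + 1), γ s * α - F := heq
              _ = γ (t + 1) * α + G - F := by rw [hGsplit]
          linarith [h2, h3]
  intro t ht
  have h1 := (key t ht).2
  have h2 : ∑ s ∈ Icc 1 t, γ s * α ≤ α := by
    rw [← Finset.sum_mul]
    nlinarith [hpartial t]
  linarith
end

section
/- Combining the previous two facts: under the Batch_St-BH update of Algorithm 6 with W₀ ≤ α and nonnegative (γ_t), (γ'_t) each summing to 1, the adaptive FDP estimate satisfies Σ_{j=1}^t α_j k_j · R_j⁺/(R_j⁺ + Σ_{r≤t, r≠j} R_r) ≤ (Σ_{j=1}^t n_j α_j k_j)/(1 ∨ Σ_{j=1}^t R_j) ≤ α for all t ≥ 1. -/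
open Finset

private lemma my_swap (t : ℕ) (F : ℕ → ℕ → ℝ) :
    ∑ t' ∈ Icc 1 t, ∑ j ∈ Icc 1 (t' - 1), F t' j
      = ∑ j ∈ Icc 1 (t - 1), ∑ t' ∈ Icc (j + 1) t, F t' j := by
  refine Finset.sum_comm' ?_
  intro x y; simp only [mem_Icc]; omega

private lemma my_shift_le_one (g : ℕ → ℝ) (hg : ∀ i, 0 ≤ g i)
    (hsum : ∑' i : ℕ, g (i + 1) = 1) (j t : ℕ) :
    ∑ u ∈ Icc (j + 1) t, g (u - j) ≤ 1 := by
  have hsumm : Summable (fun i : ℕ => g (i + 1)) := by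
    by_contra h; rw [tsum_eq_zero_of_not_summable h] at hsum; norm_num at hsum
  have heq : ∑ u ∈ Icc (j + 1) t, g (u - j) = ∑ m ∈ range (t - j), g (m + 1) := by
    refine Finset.sum_nbij' (fun u => u - j - 1) (fun m => m + j + 1) ?_ ?_ ?_ ?_ ?_ <;>
      intro a ha <;> simp only [mem_Icc, mem_range] at * <;> first | omega | (congr 1; omega)
  rw [heq, ← hsum]
  exact Summable.sum_le_tsum _ (fun i _ => hg _) hsumm

open Classical in
/-- **FDP-estimate control for Batch_St-BH (Algorithm 6).**  Under the Algorithm 6 update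
`n_t α_t = s(t) + Σ_{j<t} γ'_{t−j}(1−k_j) n_j α_j` with
`s(t) = γ_t W₀ + α Σ_{j<t} γ_{t−j} R_j − W₀ Σ_{j<t} γ_{t−j} 1{j=τ₁}`, `W₀ ≤ α` and
nonnegative `(γ_t)`, `(γ'_t)` each summing to `1`, the adaptive FDP estimate satisfies
`Σ_{j≤t} α_j k_j R_j⁺/(R_j⁺ + Σ_{r≤t,r≠j} R_r) ≤ (Σ_{j≤t} n_j α_j k_j)/(1 ∨ Σ_{j≤t} R_j) ≤ α`
for all `t ≥ 1`. -/
theorem batchStBH_fdp_control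
    (α W₀ : ℝ) (hα : 0 < α) (hW₀ : 0 ≤ W₀) (hWα : W₀ ≤ α)
    (γ γ' : ℕ → ℝ) (hγ : ∀ t, 0 ≤ γ t) (hγ' : ∀ t, 0 ≤ γ' t)
    (hγsum : ∑' t : ℕ, γ (t + 1) = 1) (hγ'sum : ∑' t : ℕ, γ' (t + 1) = 1)
    (k : ℕ → ℕ) (hk : ∀ j, k j ≤ 1)
    (n : ℕ → ℕ) (hn : ∀ j, 1 ≤ n j)
    (R Rplus : ℕ → ℕ) (hRp : ∀ j, R j ≤ Rplus j) (hpn : ∀ j, Rplus j ≤ n j)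
    (s : ℕ → ℝ)
    (hs : ∀ t, 1 ≤ t →
      s t = γ t * W₀ + α * ∑ j ∈ Icc 1 (t - 1), γ (t - j) * (R j : ℝ)
          - W₀ * ∑ j ∈ Icc 1 (t - 1), γ (t - j) *
              (if 0 < R j ∧ ∀ u, 1 ≤ u → u < j → R u = 0 then (1 : ℝ) else 0))
    (a : ℕ → ℝ) (hanonneg : ∀ t, 0 ≤ a t)
    (ha : ∀ t, 1 ≤ t →
      (n t : ℝ) * a t
        = s t + ∑ j ∈ Icc 1 (t - 1), γ' (t - j) * (1 - (k j : ℝ)) * (n j : ℝ) * a j) :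
    ∀ t, 1 ≤ t →
      (∑ j ∈ Icc 1 t,
          a j * (k j : ℝ)
            * ((Rplus j : ℝ) / ((Rplus j : ℝ) + ∑ r ∈ (Icc 1 t).erase j, (R r : ℝ)))
        ≤ (∑ j ∈ Icc 1 t, (n j : ℝ) * a j * (k j : ℝ))
            / max 1 (∑ j ∈ Icc 1 t, (R j : ℝ)))
      ∧ (∑ j ∈ Icc 1 t, (n j : ℝ) * a j * (k j : ℝ))
            / max 1 (∑ j ∈ Icc 1 t, (R j : ℝ)) ≤ α := by
  intro t ht
  set M : ℝ := max 1 (∑ j ∈ Icc 1 t, (R j : ℝ)) with hMdef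
  have hM1 : (1 : ℝ) ≤ M := le_max_left _ _
  have hMpos : (0 : ℝ) < M := by linarith
  have hk1 : ∀ j, (k j : ℝ) ≤ 1 := fun j => by exact_mod_cast hk j
  have hk0 : ∀ j, (0 : ℝ) ≤ (k j : ℝ) := fun j => Nat.cast_nonneg _
  -- the (1-k) n a quantities
  have hcnonneg : ∀ j, 0 ≤ (1 - (k j : ℝ)) * (n j : ℝ) * a j := fun j =>
    mul_nonneg (mul_nonneg (by linarith [hk1 j]) (Nat.cast_nonneg _)) (hanonneg j)
  -- partial γ' sums
  have hd'le : ∀ j, ∑ t' ∈ Icc (j + 1) t, γ' (t' - j) ≤ 1 :=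
    fun j => my_shift_le_one γ' hγ' hγ'sum j t
  -- Step A: sum of the recursion
  have hsum_na : ∑ t' ∈ Icc 1 t, (n t' : ℝ) * a t'
      = ∑ t' ∈ Icc 1 t, s t'
        + ∑ j ∈ Icc 1 (t - 1), (∑ t' ∈ Icc (j + 1) t, γ' (t' - j))
            * ((1 - (k j : ℝ)) * (n j : ℝ) * a j) := by
    calc ∑ t' ∈ Icc 1 t, (n t' : ℝ) * a t'
        = ∑ t' ∈ Icc 1 t, (s t' + ∑ j ∈ Icc 1 (t' - 1), γ' (t' - j) * (1 - (k j : ℝ)) * (n j : ℝ) * a j) := by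
          refine sum_congr rfl fun t' ht' => ?_
          exact ha t' (by simp only [mem_Icc] at ht'; omega)
      _ = ∑ t' ∈ Icc 1 t, s t'
          + ∑ t' ∈ Icc 1 t, ∑ j ∈ Icc 1 (t' - 1), γ' (t' - j) * (1 - (k j : ℝ)) * (n j : ℝ) * a j := by
          rw [sum_add_distrib]
      _ = ∑ t' ∈ Icc 1 t, s t'
          + ∑ j ∈ Icc 1 (t - 1), ∑ t' ∈ Icc (j + 1) t, γ' (t' - j) * (1 - (k j : ℝ)) * (n j : ℝ) * a j := by
          rw [my_swap t (fun t' j => γ' (t' - j) * (1 - (k j : ℝ)) * (n j : ℝ) * a j)]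
      _ = _ := by
          congr 1
          refine sum_congr rfl fun j _ => ?_
          rw [sum_mul]
          refine sum_congr rfl fun t' _ => ?_
          ring
  have hA : ∑ j ∈ Icc 1 t, (n j : ℝ) * a j * (k j : ℝ) ≤ ∑ t' ∈ Icc 1 t, s t' := by
    have e : ∑ j ∈ Icc 1 t, (n j : ℝ) * a j * (k j : ℝ)
        = ∑ j ∈ Icc 1 t, (n j : ℝ) * a j - ∑ j ∈ Icc 1 t, (1 - (k j : ℝ)) * (n j : ℝ) * a j := by
      rw [← sum_sub_distrib]; exact sum_congr rfl fun j _ => by ring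
    have step1 : ∑ j ∈ Icc 1 (t - 1), (∑ t' ∈ Icc (j + 1) t, γ' (t' - j))
          * ((1 - (k j : ℝ)) * (n j : ℝ) * a j)
        ≤ ∑ j ∈ Icc 1 (t - 1), (1 - (k j : ℝ)) * (n j : ℝ) * a j :=
      sum_le_sum fun j _ => mul_le_of_le_one_left (hcnonneg j) (hd'le j)
    have step2 : ∑ j ∈ Icc 1 (t - 1), (1 - (k j : ℝ)) * (n j : ℝ) * a j
        ≤ ∑ j ∈ Icc 1 t, (1 - (k j : ℝ)) * (n j : ℝ) * a j :=
      sum_le_sum_of_subset_of_nonneg (Icc_subset_Icc_right (by omega))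
        (fun j _ _ => hcnonneg j)
    rw [e, hsum_na]; linarith
  -- Step B: bound on ∑ s
  have hB : ∑ t' ∈ Icc 1 t, s t' ≤ α * M := by
    have hSsum : ∑ t' ∈ Icc 1 t, s t'
        = W₀ * (∑ t' ∈ Icc 1 t, γ t')
          + α * ∑ j ∈ Icc 1 (t - 1), (∑ t' ∈ Icc (j + 1) t, γ (t' - j)) * (R j : ℝ)
          - W₀ * ∑ j ∈ Icc 1 (t - 1), (∑ t' ∈ Icc (j + 1) t, γ (t' - j))
              * (if 0 < R j ∧ ∀ u, 1 ≤ u → u < j → R u = 0 then (1 : ℝ) else 0) := by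
      calc ∑ t' ∈ Icc 1 t, s t'
          = ∑ t' ∈ Icc 1 t, (γ t' * W₀
              + α * ∑ j ∈ Icc 1 (t' - 1), γ (t' - j) * (R j : ℝ)
              - W₀ * ∑ j ∈ Icc 1 (t' - 1), γ (t' - j) *
                  (if 0 < R j ∧ ∀ u, 1 ≤ u → u < j → R u = 0 then (1 : ℝ) else 0)) := by
            refine sum_congr rfl fun t' ht' => ?_
            exact hs t' (by simp only [mem_Icc] at ht'; omega)
        _ = ∑ t' ∈ Icc 1 t, γ t' * W₀
            + ∑ t' ∈ Icc 1 t, α * ∑ j ∈ Icc 1 (t' - 1), γ (t' - j) * (R j : ℝ)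
            - ∑ t' ∈ Icc 1 t, W₀ * ∑ j ∈ Icc 1 (t' - 1), γ (t' - j) *
                (if 0 < R j ∧ ∀ u, 1 ≤ u → u < j → R u = 0 then (1 : ℝ) else 0) := by
            rw [sum_sub_distrib, sum_add_distrib]
        _ = _ := by
            have eα : ∑ t' ∈ Icc 1 t, ∑ j ∈ Icc 1 (t' - 1), γ (t' - j) * (R j : ℝ)
                = ∑ j ∈ Icc 1 (t - 1), (∑ t' ∈ Icc (j + 1) t, γ (t' - j)) * (R j : ℝ) := by
              rw [my_swap t (fun t' j => γ (t' - j) * (R j : ℝ))]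
              exact sum_congr rfl fun j _ => (sum_mul _ _ _).symm
            have eW : ∑ t' ∈ Icc 1 t, ∑ j ∈ Icc 1 (t' - 1), (γ (t' - j) *
                  (if 0 < R j ∧ ∀ u, 1 ≤ u → u < j → R u = 0 then (1 : ℝ) else 0))
                = ∑ j ∈ Icc 1 (t - 1), (∑ t' ∈ Icc (j + 1) t, γ (t' - j)) *
                  (if 0 < R j ∧ ∀ u, 1 ≤ u → u < j → R u = 0 then (1 : ℝ) else 0) := by
              rw [my_swap t (fun t' j => γ (t' - j) *
                (if 0 < R j ∧ ∀ u, 1 ≤ u → u < j → R u = 0 then (1 : ℝ) else 0))]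
              exact sum_congr rfl fun j _ => (sum_mul _ _ _).symm
            rw [← mul_sum, ← mul_sum, ← sum_mul, mul_comm (∑ t' ∈ Icc 1 t, γ t') W₀,
              eα, eW]
    have hD : ∑ t' ∈ Icc 1 t, γ t' ≤ 1 := by
      have := my_shift_le_one γ hγ hγsum 0 t
      simpa using this
    have hD0 : 0 ≤ ∑ t' ∈ Icc 1 t, γ t' := sum_nonneg fun _ _ => hγ _
    have hdle : ∀ j, ∑ t' ∈ Icc (j + 1) t, γ (t' - j) ≤ 1 :=
      fun j => my_shift_le_one γ hγ hγsum j t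
    have hd0 : ∀ j, 0 ≤ ∑ t' ∈ Icc (j + 1) t, γ (t' - j) :=
      fun j => sum_nonneg fun _ _ => hγ _
    have hMge : ∑ j ∈ Icc 1 t, (R j : ℝ) ≤ M := le_max_right _ _
    rw [hSsum]
    by_cases hcase : ∀ j ∈ Icc 1 (t - 1), R j = 0
    · have hT : ∑ j ∈ Icc 1 (t - 1), (∑ t' ∈ Icc (j + 1) t, γ (t' - j)) * (R j : ℝ) = 0 :=
        sum_eq_zero fun j hj => by rw [hcase j hj]; simp
      have hU : 0 ≤ ∑ j ∈ Icc 1 (t - 1), (∑ t' ∈ Icc (j + 1) t, γ (t' - j))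
          * (if 0 < R j ∧ ∀ u, 1 ≤ u → u < j → R u = 0 then (1 : ℝ) else 0) :=
        sum_nonneg fun j _ => mul_nonneg (hd0 j) (by split <;> norm_num)
      have h1 : W₀ * (∑ t' ∈ Icc 1 t, γ t') ≤ W₀ := by
        nlinarith [mul_nonneg hW₀ (sub_nonneg.2 hD)]
      rw [hT]
      nlinarith [mul_nonneg hW₀ hU, mul_le_mul_of_nonneg_left hM1 hα.le]
    · push_neg at hcase
      obtain ⟨j₀, hj₀mem, hj₀⟩ := hcase
      have hex : ∃ j, (1 ≤ j ∧ j ≤ t - 1 ∧ R j ≠ 0) := by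
        refine ⟨j₀, ?_, ?_, hj₀⟩ <;> simp only [mem_Icc] at hj₀mem <;> omega
      set τ := Nat.find hex with hτdef
      obtain ⟨hτ1, hτt, hτR⟩ := Nat.find_spec hex
      rw [← hτdef] at hτ1 hτt hτR
      have hτmin : ∀ u, u < τ → ¬(1 ≤ u ∧ u ≤ t - 1 ∧ R u ≠ 0) := fun u hu => Nat.find_min hex hu
      have hτmem : τ ∈ Icc 1 (t - 1) := by simp only [mem_Icc]; omega
      have hindτ : (if 0 < R τ ∧ ∀ u, 1 ≤ u → u < τ → R u = 0 then (1 : ℝ) else 0) = 1 := by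
        rw [if_pos]
        refine ⟨Nat.pos_of_ne_zero hτR, fun u hu1 huτ => ?_⟩
        have := hτmin u huτ
        by_contra hru
        exact this ⟨hu1, by omega, hru⟩
      set dτ : ℝ := ∑ t' ∈ Icc (τ + 1) t, γ (t' - τ) with hdτdef
      have hdτ0 : 0 ≤ dτ := hd0 τ
      have hdτ1 : dτ ≤ 1 := hdle τ
      -- U ≥ dτ
      have hU : dτ ≤ ∑ j ∈ Icc 1 (t - 1), (∑ t' ∈ Icc (j + 1) t, γ (t' - j))
          * (if 0 < R j ∧ ∀ u, 1 ≤ u → u < j → R u = 0 then (1 : ℝ) else 0) := by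
        have := single_le_sum (f := fun j => (∑ t' ∈ Icc (j + 1) t, γ (t' - j))
            * (if 0 < R j ∧ ∀ u, 1 ≤ u → u < j → R u = 0 then (1 : ℝ) else 0))
          (fun j _ => mul_nonneg (hd0 j) (by split <;> norm_num)) hτmem
        simpa only [hindτ, mul_one] using this
      -- T ≤ dτ * Rτ + E
      set E : ℝ := ∑ j ∈ (Icc 1 (t - 1)).erase τ, (R j : ℝ) with hEdef
      have hE0 : 0 ≤ E := sum_nonneg fun _ _ => Nat.cast_nonneg _
      have hT : ∑ j ∈ Icc 1 (t - 1), (∑ t' ∈ Icc (j + 1) t, γ (t' - j)) * (R j : ℝ)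
          ≤ dτ * (R τ : ℝ) + E := by
        rw [← Finset.add_sum_erase _ (fun j => (∑ t' ∈ Icc (j + 1) t, γ (t' - j)) * (R j : ℝ)) hτmem]
        refine add_le_add le_rfl (sum_le_sum fun j _ => ?_)
        exact mul_le_of_le_one_left (Nat.cast_nonneg _) (hdle j)
      have hRE : (R τ : ℝ) + E ≤ M := by
        have h1 : (R τ : ℝ) + E = ∑ j ∈ Icc 1 (t - 1), (R j : ℝ) :=
          Finset.add_sum_erase _ (fun j => (R j : ℝ)) hτmem
        have h2 : ∑ j ∈ Icc 1 (t - 1), (R j : ℝ) ≤ ∑ j ∈ Icc 1 t, (R j : ℝ) :=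
          sum_le_sum_of_subset_of_nonneg (Icc_subset_Icc_right (by omega))
            (fun _ _ _ => Nat.cast_nonneg _)
        linarith
      have hRτ1 : (1 : ℝ) ≤ (R τ : ℝ) := by
        have : 1 ≤ R τ := Nat.pos_of_ne_zero hτR
        exact_mod_cast this
      -- final arithmetic
      have key : W₀ * (∑ t' ∈ Icc 1 t, γ t')
          + α * (dτ * (R τ : ℝ) + E) - W₀ * dτ ≤ α * ((R τ : ℝ) + E) := by
        nlinarith [mul_nonneg (sub_nonneg.2 hWα) (sub_nonneg.2 hdτ1),
          mul_nonneg hW₀ (sub_nonneg.2 hD),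
          mul_nonneg (mul_nonneg hα.le (sub_nonneg.2 hRτ1)) (sub_nonneg.2 hdτ1)]
      have hTα : α * ∑ j ∈ Icc 1 (t - 1), (∑ t' ∈ Icc (j + 1) t, γ (t' - j)) * (R j : ℝ)
          ≤ α * (dτ * (R τ : ℝ) + E) := mul_le_mul_of_nonneg_left hT hα.le
      have hfin : α * ((R τ : ℝ) + E) ≤ α * M := mul_le_mul_of_nonneg_left hRE hα.le
      linarith [mul_le_mul_of_nonneg_left hU hW₀, hTα, key, hfin]
  -- conclude
  have KEY : ∑ j ∈ Icc 1 t, (n j : ℝ) * a j * (k j : ℝ) ≤ α * M := le_trans hA hB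
  constructor
  · rw [sum_div]
    refine sum_le_sum fun j hj => ?_
    set S : ℝ := ∑ r ∈ (Icc 1 t).erase j, (R r : ℝ) with hSdef
    have hS0 : 0 ≤ S := sum_nonneg fun _ _ => Nat.cast_nonneg _
    have hRS : (R j : ℝ) + S = ∑ r ∈ Icc 1 t, (R r : ℝ) :=
      Finset.add_sum_erase _ (fun r => (R r : ℝ)) hj
    by_cases hz : (Rplus j : ℝ) + S = 0
    · have hRp0 : (Rplus j : ℝ) = 0 := by
        have : (0:ℝ) ≤ (Rplus j : ℝ) := Nat.cast_nonneg _
        linarith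
      rw [hRp0]
      simp only [zero_div, mul_zero]
      exact div_nonneg (mul_nonneg (mul_nonneg (Nat.cast_nonneg _) (hanonneg j)) (hk0 j))
        hMpos.le
    · have hcast : (Rplus j : ℝ) + S = ((Rplus j + ∑ r ∈ (Icc 1 t).erase j, R r : ℕ) : ℝ) := by
        push_cast [hSdef]; ring
      have hpos : 0 < (Rplus j : ℝ) + S := by
        rcases lt_or_eq_of_le (add_nonneg (Nat.cast_nonneg _) hS0) with h | h
        · exact h
        · exact absurd h.symm hz
      have hge1 : 1 ≤ (Rplus j : ℝ) + S := by
        rw [hcast] at hpos ⊢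
        have : 0 < (Rplus j + ∑ r ∈ (Icc 1 t).erase j, R r : ℕ) := by exact_mod_cast hpos
        exact_mod_cast this
      have hMle : M ≤ (Rplus j : ℝ) + S := by
        refine max_le hge1 ?_
        rw [← hRS]
        have : (R j : ℝ) ≤ (Rplus j : ℝ) := Nat.cast_le.2 (hRp j)
        linarith
      have hkey : (Rplus j : ℝ) * M ≤ (n j : ℝ) * ((Rplus j : ℝ) + S) := by
        calc (Rplus j : ℝ) * M ≤ (n j : ℝ) * M :=
              mul_le_mul_of_nonneg_right (Nat.cast_le.2 (hpn j)) hMpos.le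
          _ ≤ (n j : ℝ) * ((Rplus j : ℝ) + S) :=
              mul_le_mul_of_nonneg_left hMle (Nat.cast_nonneg _)
      rw [← mul_div_assoc, div_le_div_iff₀ hpos hMpos]
      have hak : 0 ≤ a j * (k j : ℝ) := mul_nonneg (hanonneg j) (hk0 j)
      calc a j * (k j : ℝ) * (Rplus j : ℝ) * M
          = a j * (k j : ℝ) * ((Rplus j : ℝ) * M) := by ring
        _ ≤ a j * (k j : ℝ) * ((n j : ℝ) * ((Rplus j : ℝ) + S)) :=
            mul_le_mul_of_nonneg_left hkey hak
        _ = (n j : ℝ) * a j * (k j : ℝ) * ((Rplus j : ℝ) + S) := by ring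
  · rw [div_le_iff₀ hMpos]
    exact KEY
end

section
/- Let P_1, ..., P_n ∈ [0,1] and α ∈ (0,1). Define the BH rejection count R = max{ i ∈ {0,...,n} : P_{(i)} ≤ (α/n) i } (with P_{(0)} = 0, and P_{(i)} the i-th smallest p-value). For a fixed index j, let P^{(−j)} be the same multiset with P_j replaced by 0 and let R^{(−j)} be the BH rejection count on P^{(−j)}. Then R ≤ R^{(−j)}, and if P_j ≤ (α/n) R then R = R^{(−j)}. -/
open Finset
open scoped Classical

/-- The Benjamini–Hochberg rejection count at level `a` on `n` p-values: the largest
`i ∈ {0,…,n}` such that the `i`-th order statistic is at most `a·i/n`, equivalently such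
that at least `i` of the p-values are `≤ a·i/n`. -/
noncomputable def bhCount (n : ℕ) (a : ℝ) (P : Fin n → ℝ) : ℕ :=
  Nat.findGreatest (fun i => i ≤ (Finset.univ.filter fun j => P j ≤ a * i / n).card) n

/-- **Leave-one-out stability of BH.**  Let `R` be the BH rejection count on
`P_1,…,P_n ∈ [0,1]` at level `α ∈ (0,1)`, and let `R^{(−j)}` be the BH count after
replacing `P_j` by `0`.  Then `R ≤ R^{(−j)}`, and if `P_j ≤ (α/n) R` then `R = R^{(−j)}`. -/
theorem bh_leave_one_out
    (n : ℕ) (hn : 0 < n) (a : ℝ) (ha : a ∈ Set.Ioo (0 : ℝ) 1)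
    (P : Fin n → ℝ) (hP : ∀ i, P i ∈ Set.Icc (0 : ℝ) 1) (j : Fin n) :
    bhCount n a P ≤ bhCount n a (Function.update P j 0)
    ∧ (P j ≤ a / n * bhCount n a P → bhCount n a P = bhCount n a (Function.update P j 0)) := by
  obtain ⟨ha0, _⟩ := ha
  set Q : Fin n → ℝ := Function.update P j 0 with hQ
  set R := bhCount n a P with hRdef
  set R' := bhCount n a Q with hR'def
  have hRle : R ≤ n := Nat.findGreatest_le n
  have hR'le : R' ≤ n := Nat.findGreatest_le n
  -- R satisfies the predicate for P
  have hpredP : (R : ℕ) ≤ (Finset.univ.filter fun k => P k ≤ a * R / n).card := by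
    exact Nat.findGreatest_spec (P := fun i => i ≤ (Finset.univ.filter fun k => P k ≤ a * i / n).card) (Nat.zero_le n) (Nat.zero_le _)
  have hpredQ : (R' : ℕ) ≤ (Finset.univ.filter fun k => Q k ≤ a * R' / n).card := by
    exact Nat.findGreatest_spec (P := fun i => i ≤ (Finset.univ.filter fun k => Q k ≤ a * i / n).card) (Nat.zero_le n) (Nat.zero_le _)
  -- Part 1
  have h1 : R ≤ R' := by
    apply Nat.le_findGreatest hRle
    refine hpredP.trans (Finset.card_le_card ?_)
    intro k hk
    simp only [Finset.mem_filter, Finset.mem_univ, true_and] at hk ⊢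
    rcases eq_or_ne k j with rfl | hkj
    · have : Q k = 0 := by simp [hQ]
      rw [this]
      exact le_trans (hP k).1 hk
    · rw [hQ, Function.update_of_ne hkj]; exact hk
  refine ⟨h1, fun hPj => ?_⟩
  -- Part 2: show R' ≤ R
  have h2 : R' ≤ R := by
    rcases Nat.eq_zero_or_pos R' with h0 | hpos
    · omega
    apply Nat.le_findGreatest hR'le
    refine hpredQ.trans (Finset.card_le_card ?_)
    intro k hk
    simp only [Finset.mem_filter, Finset.mem_univ, true_and] at hk ⊢
    rcases eq_or_ne k j with rfl | hkj
    · -- P j ≤ a/n * R ≤ a * R' / n since R ≤ R'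
      have hn' : (0:ℝ) < n := by exact_mod_cast hn
      calc P k ≤ a / n * R := hPj
        _ ≤ a * R' / n := by
            rw [div_mul_eq_mul_div]
            have : (R:ℝ) ≤ R' := by exact_mod_cast h1
            gcongr
    · rw [hQ, Function.update_of_ne hkj] at hk; exact hk
  omega
end

section
/- Let P_1,...,P_n ∈ [0,1], α ∈ (0,1), and let R be the BH rejection count. For any index i and any r ∈ {1,...,n}: 1{P_i ≤ (α/n) r and R = r} = 1{P_i ≤ (α/n) r and R^{(−i)} = r − 1}, where R^{(−i)} = max{1 ≤ j ≤ n−1 : P^{(−i)}_{(j)} ≤ (α/n)(j+1)} is the modified BH count on the n−1 p-values obtained by deleting P_i, and P^{(−i)}_{(j)} denotes the j-th order statistic of the remaining p-values. -/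
open Finset
open scoped Classical

/-- The *modified* BH count on the `n−1` p-values obtained by deleting `P_i`:
`R^{(−i)} = max{1 ≤ j ≤ n−1 : P^{(−i)}_{(j)} ≤ (a/n)(j+1)}` (equal to `0` if no such `j`),
stated via the order-statistic characterization
`P^{(−i)}_{(j)} ≤ u ↔ #{k ≠ i : P_k ≤ u} ≥ j`. -/
noncomputable def modBhCount (n : ℕ) (a : ℝ) (P : Fin n → ℝ) (i : Fin n) : ℕ :=
  Nat.findGreatest
    (fun j => j ≤ ((Finset.univ.erase i).filter fun k => P k ≤ a * (j + 1) / n).card) (n - 1)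

/-- **Leave-one-out identity for BH.**  For any index `i` and any `r ∈ {1,…,n}`:
`1{P_i ≤ (α/n)r ∧ R = r} = 1{P_i ≤ (α/n)r ∧ R^{(−i)} = r−1}`. -/
theorem bh_leave_one_out_identity
    (n : ℕ) (hn : 0 < n) (a : ℝ) (ha : a ∈ Set.Ioo (0 : ℝ) 1)
    (P : Fin n → ℝ) (hP : ∀ i, P i ∈ Set.Icc (0 : ℝ) 1)
    (i : Fin n) (r : ℕ) (hr1 : 1 ≤ r) (hrn : r ≤ n) :
    (P i ≤ a / n * r ∧ bhCount n a P = r)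
      ↔ (P i ≤ a / n * r ∧ modBhCount n a P i = r - 1) := by
  obtain ⟨ha0, ha1⟩ := ha
  have hn' : (0:ℝ) < n := by exact_mod_cast hn
  -- cardinality relation when `P i ≤ u`
  have key : ∀ u : ℝ, P i ≤ u →
      (Finset.univ.filter fun k => P k ≤ u).card
        = ((Finset.univ.erase i).filter fun k => P k ≤ u).card + 1 := by
    intro u hu
    have hi : i ∈ Finset.univ.filter fun k => P k ≤ u := by simp [hu]
    have hpos : 0 < (Finset.univ.filter fun k => P k ≤ u).card :=
      Finset.card_pos.mpr ⟨i, hi⟩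
    rw [Finset.filter_erase, Finset.card_erase_of_mem hi]
    omega
  have mono : ∀ m m' : ℝ, m ≤ m' → a * m / n ≤ a * m' / n := by
    intro m m' h
    gcongr
  have hPiff : P i ≤ a / n * r ↔ P i ≤ a * r / n := by
    constructor <;> intro h <;> [linarith [h, (by ring : a / n * r = a * r / n)];
      linarith [h, (by ring : a / n * r = a * r / n)]]
  unfold bhCount modBhCount
  constructor
  · rintro ⟨hPi, hR⟩
    refine ⟨hPi, ?_⟩
    have hPi' : P i ≤ a * r / n := hPiff.mp hPi
    rw [Nat.findGreatest_eq_iff] at hR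
    obtain ⟨hRn, hQr, hfail⟩ := hR
    have hq : (r : ℕ) ≤ (Finset.univ.filter fun j => P j ≤ a * r / n).card := hQr (by omega)
    rw [Nat.findGreatest_eq_iff]
    refine ⟨by omega, ?_, ?_⟩
    · intro _
      have hcast : ((r - 1 : ℕ) : ℝ) + 1 = (r : ℝ) := by
        have : ((r - 1 : ℕ) : ℝ) = (r : ℝ) - 1 := by
          push_cast [Nat.cast_sub hr1]; ring
        rw [this]; ring
      simp only [hcast]
      have := key (a * r / n) hPi'
      omega
    · intro j hj1 hj2
      have hjr : r < j + 1 := by omega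
      have hjn : j + 1 ≤ n := by omega
      have h := hfail hjr hjn
      have hPij : P i ≤ a * ((j : ℝ) + 1) / n := by
        refine le_trans hPi' (mono _ _ ?_)
        have : (r : ℝ) ≤ (j : ℝ) + 1 := by exact_mod_cast hjr.le
        linarith
      have hk := key (a * ((j : ℝ) + 1) / n) hPij
      have hcast : ((j + 1 : ℕ) : ℝ) = (j : ℝ) + 1 := by push_cast; ring
      rw [hcast] at h
      omega
  · rintro ⟨hPi, hR⟩
    refine ⟨hPi, ?_⟩
    have hPi' : P i ≤ a * r / n := hPiff.mp hPi
    rw [Nat.findGreatest_eq_iff] at hR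
    obtain ⟨hRn, hQr, hfail⟩ := hR
    have hcast : ((r - 1 : ℕ) : ℝ) + 1 = (r : ℝ) := by
      have : ((r - 1 : ℕ) : ℝ) = (r : ℝ) - 1 := by
        push_cast [Nat.cast_sub hr1]; ring
      rw [this]; ring
    rw [Nat.findGreatest_eq_iff]
    refine ⟨hrn, ?_, ?_⟩
    · intro _
      have hk := key (a * r / n) hPi'
      rcases Nat.eq_or_lt_of_le hr1 with h1 | h1
      · -- r = 1 : just need 1 ≤ card
        omega
      · have hq : (r - 1 : ℕ) ≤
            ((Finset.univ.erase i).filter fun k => P k ≤ a * (((r - 1 : ℕ) : ℝ) + 1) / n).card :=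
          hQr (by omega)
        rw [hcast] at hq
        omega
    · intro j hj1 hj2
      have h := hfail (show r - 1 < j - 1 by omega) (show j - 1 ≤ n - 1 by omega)
      have hcastj : ((j - 1 : ℕ) : ℝ) + 1 = (j : ℝ) := by
        have : ((j - 1 : ℕ) : ℝ) = (j : ℝ) - 1 := by
          push_cast [Nat.cast_sub (show 1 ≤ j by omega)]; ring
        rw [this]; ring
      rw [hcastj] at h
      have hPij : P i ≤ a * (j : ℝ) / n := by
        refine le_trans hPi' (mono _ _ ?_)
        exact_mod_cast (by omega : r ≤ j)
      have hk := key (a * (j : ℝ) / n) hPij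
      omega
end

section
/- Let P_1,...,P_n be independent random variables in [0,1], let H⁰ ⊆ {1,...,n} be the set of indices with P(P_i ≤ u) ≤ u for all u ∈ [0,1], and let R be the BH rejection count at level α with rejection set 𝓡. Let V = |H⁰ ∩ 𝓡| be the number of false discoveries. Then E[V] ≤ (α/n) Σ_{i∈H⁰} E[R | P_i ∈ 𝓡], where the conditional expectation given P_i ∈ 𝓡 is defined when P(P_i ∈ 𝓡) > 0, and terms with P(P_i ∈ 𝓡) = 0 contribute 0. -/
open Finset MeasureTheory ProbabilityTheory
open scoped Classical

lemma bhCount_le {n : ℕ} {a : ℝ} (P : Fin n → ℝ) : bhCount n a P ≤ n :=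
  Nat.findGreatest_le n

lemma bhCount_mono {n : ℕ} {a : ℝ} {P Q : Fin n → ℝ} (h : ∀ j, Q j ≤ P j) :
    bhCount n a P ≤ bhCount n a Q := by
  refine Nat.findGreatest_mono (fun k hk => hk.trans (Finset.card_le_card ?_)) le_rfl
  intro j hj
  simp only [Finset.mem_filter, Finset.mem_univ, true_and] at hj ⊢
  exact (h j).trans hj

lemma one_le_bhCount_update {n : ℕ} {a : ℝ} (hn : 0 < n) (ha : 0 < a)
    (P : Fin n → ℝ) (i : Fin n) : 1 ≤ bhCount n a (Function.update P i 0) := by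
  refine Nat.le_findGreatest hn ?_
  refine Finset.one_le_card.2 ⟨i, ?_⟩
  simp only [Finset.mem_filter, Finset.mem_univ, true_and, Function.update_self]
  positivity

lemma bhCount_update_le {n : ℕ} {a : ℝ} (hn : 0 < n) (ha : 0 < a)
    {P : Fin n → ℝ} {i : Fin n}
    (h : P i ≤ a / n * bhCount n a (Function.update P i 0)) :
    bhCount n a (Function.update P i 0) ≤ bhCount n a P := by
  set R' := bhCount n a (Function.update P i 0) with hR'
  refine Nat.le_findGreatest (bhCount_le _) ?_
  have hspec : R' ≤ (Finset.univ.filter fun j => Function.update P i 0 j ≤ a * R' / n).card := by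
    have h1 : (1:ℕ) ≤ (Finset.univ.filter fun j => Function.update P i 0 j ≤ a * (1:ℕ) / n).card := by
      refine Finset.one_le_card.2 ⟨i, ?_⟩
      simp only [Finset.mem_filter, Finset.mem_univ, true_and, Function.update_self]
      positivity
    exact Nat.findGreatest_spec (P := fun k =>
      k ≤ (Finset.univ.filter fun j => Function.update P i 0 j ≤ a * k / n).card) hn h1
  refine hspec.trans_eq (congrArg Finset.card ?_)
  apply Finset.filter_congr
  intro j _
  rcases eq_or_ne j i with rfl | hji
  · simp only [Function.update_self, eq_iff_iff]
    constructor
    · intro _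
      calc P j ≤ a / n * R' := h
        _ = a * R' / n := by ring
    · intro _; positivity
  · simp [Function.update_of_ne hji]

lemma bhCount_eq_update {n : ℕ} {a : ℝ} (hn : 0 < n) (ha : 0 < a)
    {P : Fin n → ℝ} {i : Fin n} (hPi : 0 ≤ P i)
    (h : P i ≤ a / n * bhCount n a (Function.update P i 0)) :
    bhCount n a P = bhCount n a (Function.update P i 0) :=
  le_antisymm (bhCount_mono fun j => by
    rcases eq_or_ne j i with rfl | hji
    · simp [Function.update_self, hPi]
    · simp [Function.update_of_ne hji]) (bhCount_update_le hn ha h)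

lemma bhCount_reject_iff {n : ℕ} {a : ℝ} (hn : 0 < n) (ha : 0 < a)
    {P : Fin n → ℝ} {i : Fin n} (hPi : 0 ≤ P i) :
    (P i ≤ a / n * bhCount n a P ∧ 0 < bhCount n a P) ↔
      P i ≤ a / n * bhCount n a (Function.update P i 0) := by
  constructor
  · rintro ⟨h1, _⟩
    refine h1.trans ?_
    have hle : bhCount n a P ≤ bhCount n a (Function.update P i 0) :=
      bhCount_mono fun j => by
        rcases eq_or_ne j i with rfl | hji
        · simp [Function.update_self, hPi]
        · simp [Function.update_of_ne hji]
    have hle' : (bhCount n a P : ℝ) ≤ bhCount n a (Function.update P i 0) := by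
      exact_mod_cast hle
    have hna : 0 ≤ a / n := by positivity
    nlinarith
  · intro h
    have heq := bhCount_eq_update hn ha hPi h
    refine ⟨by rw [heq]; exact h, ?_⟩
    rw [heq]
    exact one_le_bhCount_update hn ha P i

lemma measurable_bhCount {n : ℕ} {a : ℝ} : Measurable (bhCount n a) := by
  apply measurable_findGreatest
  intro k _
  have hm : Measurable fun x : Fin n → ℝ =>
      (Finset.univ.filter fun j => x j ≤ a * k / n).card := by
    simp_rw [Finset.card_filter]
    apply Finset.measurable_sum
    intro j _
    exact Measurable.ite (measurableSet_le (measurable_pi_apply j) measurable_const)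
      measurable_const measurable_const
  exact hm measurableSet_Ici

lemma bh_key {Ω : Type*} [MeasurableSpace Ω] (μ : Measure Ω) [IsProbabilityMeasure μ]
    (n : ℕ) (hn : 0 < n) (a : ℝ) (ha0 : 0 < a) (ha1 : a < 1)
    (P : Fin n → Ω → ℝ) (hPmeas : ∀ i, Measurable (P i))
    (hPrange : ∀ i ω, P i ω ∈ Set.Icc (0 : ℝ) 1)
    (hindep : iIndepFun P μ) (i : Fin n)
    (hnulli : ∀ u ∈ Set.Icc (0 : ℝ) 1, μ {ω | P i ω ≤ u} ≤ ENNReal.ofReal u) :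
    (μ {ω | P i ω ≤ a / n * bhCount n a (fun j => P j ω)
        ∧ 0 < bhCount n a (fun j => P j ω)}).toReal ^ 2
      ≤ a / n * ∫ ω in {ω | P i ω ≤ a / n * bhCount n a (fun j => P j ω)
        ∧ 0 < bhCount n a (fun j => P j ω)}, (bhCount n a (fun j => P j ω) : ℝ) ∂μ := by
  have hnR : (0:ℝ) < n := by exact_mod_cast hn
  set Rz : Ω → ℕ := fun ω => bhCount n a (Function.update (fun j => P j ω) i 0) with hRzdef
  set A : Set Ω := {ω | P i ω ≤ a / n * bhCount n a (fun j => P j ω)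
        ∧ 0 < bhCount n a (fun j => P j ω)} with hAdef
  have hmemA : ∀ ω, ω ∈ A ↔ P i ω ≤ a / n * Rz ω := fun ω =>
    bhCount_reject_iff (P := fun j => P j ω) (i := i) hn ha0 (hPrange i ω).1
  -- measurability
  have hRmeas : Measurable fun ω => bhCount n a (fun j => P j ω) :=
    measurable_bhCount.comp (measurable_pi_lambda _ fun j => hPmeas j)
  have hRzmeas : Measurable Rz := by
    apply measurable_bhCount.comp
    apply measurable_pi_lambda
    intro j
    have : (fun ω => Function.update (fun j' => P j' ω) i 0 j)
        = fun ω => if j = i then 0 else P j ω := by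
      funext ω; simp [Function.update_apply]
    rw [this]
    rcases eq_or_ne j i with rfl | hji
    · simp only [if_pos rfl]; exact measurable_const
    · simp only [if_neg hji]; exact hPmeas j
  have hSmeas : ∀ k : ℕ,
      MeasurableSet ({ω | Rz ω = k} ∩ {ω | P i ω ≤ a * k / n}) := fun k =>
    (hRzmeas (measurableSet_singleton k)).inter
      (measurableSet_le (hPmeas i) measurable_const)
  -- independence
  have hIF : IndepFun Rz (P i) μ := by
    have h1 := hindep.indepFun_finset ({i}ᶜ) {i} disjoint_compl_left hPmeas
    have hφ : Measurable fun x : ({i}ᶜ : Finset (Fin n)) → ℝ =>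
        bhCount n a (fun j => if h : j = i then 0 else
          x ⟨j, by simp [Finset.mem_compl, h]⟩) := by
      apply measurable_bhCount.comp
      apply measurable_pi_lambda
      intro j
      rcases eq_or_ne j i with rfl | hji
      · simp only [dif_pos rfl]; exact measurable_const
      · simp only [dif_neg hji]; exact measurable_pi_apply _
    have hψ : Measurable fun x : ({i} : Finset (Fin n)) → ℝ =>
        x ⟨i, Finset.mem_singleton_self i⟩ := measurable_pi_apply _
    have h2 := h1.comp hφ hψ
    have hc1 : ((fun x : ({i}ᶜ : Finset (Fin n)) → ℝ =>
        bhCount n a (fun j => if h : j = i then 0 else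
          x ⟨j, by simp [Finset.mem_compl, h]⟩)) ∘
        (fun ω (j : ({i}ᶜ : Finset (Fin n))) => P j ω)) = Rz := by
      funext ω
      simp only [Function.comp_apply, hRzdef]
      congr 1
      funext j
      rcases eq_or_ne j i with rfl | hji
      · simp [Function.update_self]
      · simp [hji, Function.update_of_ne hji]
    have hc2 : ((fun x : ({i} : Finset (Fin n)) → ℝ =>
        x ⟨i, Finset.mem_singleton_self i⟩) ∘
        (fun ω (j : ({i} : Finset (Fin n))) => P j ω)) = P i := rfl
    rw [hc1, hc2] at h2
    exact h2
  have hprod : ∀ k : ℕ, μ ({ω | Rz ω = k} ∩ {ω | P i ω ≤ a * k / n})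
      = μ {ω | Rz ω = k} * μ {ω | P i ω ≤ a * k / n} := by
    intro k
    have := hIF.measure_inter_preimage_eq_mul (measurableSet_singleton k) measurableSet_Iic
      (s := {k}) (t := Set.Iic (a * k / n))
    simpa [Set.preimage, Set.mem_Iic] using this
  -- partition
  have hAeq : A = ⋃ k ∈ Finset.Icc 1 n, ({ω | Rz ω = k} ∩ {ω | P i ω ≤ a * k / n}) := by
    ext ω
    rw [hmemA ω]
    simp only [Set.mem_iUnion, Set.mem_inter_iff, Set.mem_setOf_eq, Finset.mem_Icc,
      exists_prop]
    constructor
    · intro h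
      refine ⟨Rz ω, ⟨one_le_bhCount_update hn ha0 _ i, bhCount_le _⟩, rfl, ?_⟩
      calc P i ω ≤ a / n * Rz ω := h
        _ = a * Rz ω / n := by ring
    · rintro ⟨k, _, hRk, hPk⟩
      subst hRk
      calc P i ω ≤ a * Rz ω / n := hPk
        _ = a / n * Rz ω := by ring
  have hdisj : Set.PairwiseDisjoint (↑(Finset.Icc 1 n))
      (fun k => {ω | Rz ω = k} ∩ {ω | P i ω ≤ a * k / n}) := by
    intro k _ l _ hkl
    apply Set.disjoint_left.2
    rintro ω ⟨h1, _⟩ ⟨h2, _⟩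
    exact hkl ((h1.symm.trans h2 : k = l))
  set q : ℕ → ℝ := fun k => (μ {ω | Rz ω = k}).toReal with hqdef
  set p : ℕ → ℝ := fun k => (μ {ω | P i ω ≤ a * k / n}).toReal with hpdef
  have hμA : (μ A).toReal = ∑ k ∈ Finset.Icc 1 n, q k * p k := by
    rw [hAeq, measure_biUnion_finset hdisj (fun k _ => hSmeas k),
      ENNReal.toReal_sum (fun k _ => measure_ne_top μ _)]
    exact Finset.sum_congr rfl fun k _ => by rw [hprod k, ENNReal.toReal_mul]
  -- integral over A
  have hRint : Integrable (fun ω => (bhCount n a (fun j => P j ω) : ℝ)) μ := by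
    refine (integrable_const (n:ℝ)).mono' ?_ ?_
    · exact (measurable_from_nat.comp hRmeas).aestronglyMeasurable
    · refine Filter.Eventually.of_forall fun ω => ?_
      rw [Real.norm_of_nonneg (by positivity)]
      exact_mod_cast bhCount_le _
  have hInt : ∫ ω in A, (bhCount n a (fun j => P j ω) : ℝ) ∂μ
      = ∑ k ∈ Finset.Icc 1 n, (k : ℝ) * (q k * p k) := by
    rw [hAeq, integral_biUnion_finset _ (fun k _ => hSmeas k) hdisj
      (fun k _ => hRint.integrableOn)]
    refine Finset.sum_congr rfl fun k _ => ?_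
    have hEq : Set.EqOn (fun ω => (bhCount n a (fun j => P j ω) : ℝ))
        (fun _ => (k : ℝ)) ({ω | Rz ω = k} ∩ {ω | P i ω ≤ a * k / n}) := by
      rintro ω ⟨h1, h2⟩
      simp only [Set.mem_setOf_eq] at h1 h2
      have h3 : P i ω ≤ a / n * Rz ω := by
        rw [h1]
        calc P i ω ≤ a * k / n := h2
          _ = a / n * k := by ring
      have h4 := bhCount_eq_update (P := fun j => P j ω) (i := i) hn ha0 (hPrange i ω).1 h3
      simp only
      rw [h4]
      exact congrArg (Nat.cast : ℕ → ℝ) h1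
    rw [setIntegral_congr_fun (hSmeas k) hEq, setIntegral_const, measureReal_def, hprod k,
      ENNReal.toReal_mul, smul_eq_mul]
    ring
  -- null bound on p
  have hp : ∀ k ∈ Finset.Icc 1 n, p k ≤ a * k / n := by
    intro k hk
    obtain ⟨_, hkn⟩ := Finset.mem_Icc.1 hk
    have hkn' : (k:ℝ) ≤ n := by exact_mod_cast hkn
    have hu : a * k / n ∈ Set.Icc (0:ℝ) 1 := by
      constructor
      · positivity
      · calc a * k / n ≤ a * n / n := by gcongr
          _ = a := by field_simp
          _ ≤ 1 := ha1.le
    calc p k ≤ (ENNReal.ofReal (a * k / n)).toReal :=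
          ENNReal.toReal_mono ENNReal.ofReal_ne_top (hnulli _ hu)
      _ = a * k / n := ENNReal.toReal_ofReal (by positivity)
  have hq1 : ∑ k ∈ Finset.Icc 1 n, q k ≤ 1 := by
    have hd2 : Set.PairwiseDisjoint (↑(Finset.Icc 1 n)) (fun k => {ω | Rz ω = k}) := by
      intro k _ l _ hkl
      apply Set.disjoint_left.2
      rintro ω h1 h2
      exact hkl ((h1.symm.trans h2 : k = l))
    have hm2 : ∀ k ∈ Finset.Icc 1 n, MeasurableSet {ω | Rz ω = k} :=
      fun k _ => hRzmeas (measurableSet_singleton k)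
    have := measure_biUnion_finset (μ := μ) hd2 hm2
    calc ∑ k ∈ Finset.Icc 1 n, q k
        = (μ (⋃ k ∈ Finset.Icc 1 n, {ω | Rz ω = k})).toReal := by
          rw [this, ENNReal.toReal_sum (fun k _ => measure_ne_top μ _)]
      _ ≤ (μ Set.univ).toReal :=
          ENNReal.toReal_mono (measure_ne_top μ _) (measure_mono (Set.subset_univ _))
      _ = 1 := by simp
  -- Cauchy–Schwarz
  rw [hμA, hInt]
  have hqnn : ∀ k, 0 ≤ q k := fun k => ENNReal.toReal_nonneg
  have hpnn : ∀ k, 0 ≤ p k := fun k => ENNReal.toReal_nonneg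
  have hCS := Finset.sum_mul_sq_le_sq_mul_sq (Finset.Icc 1 n)
    (fun k => Real.sqrt (q k)) (fun k => Real.sqrt (q k) * p k)
  calc (∑ k ∈ Finset.Icc 1 n, q k * p k) ^ 2
      = (∑ k ∈ Finset.Icc 1 n, Real.sqrt (q k) * (Real.sqrt (q k) * p k)) ^ 2 := by
        congr 1
        exact Finset.sum_congr rfl fun k _ => by
          rw [← mul_assoc, Real.mul_self_sqrt (hqnn k)]
    _ ≤ (∑ k ∈ Finset.Icc 1 n, Real.sqrt (q k) ^ 2) *
        (∑ k ∈ Finset.Icc 1 n, (Real.sqrt (q k) * p k) ^ 2) := hCS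
    _ = (∑ k ∈ Finset.Icc 1 n, q k) * (∑ k ∈ Finset.Icc 1 n, q k * p k ^ 2) := by
        congr 1
        · exact Finset.sum_congr rfl fun k _ => Real.sq_sqrt (hqnn k)
        · exact Finset.sum_congr rfl fun k _ => by
            rw [mul_pow, Real.sq_sqrt (hqnn k)]
    _ ≤ 1 * (∑ k ∈ Finset.Icc 1 n, q k * p k ^ 2) := by
        refine mul_le_mul_of_nonneg_right hq1 ?_
        exact Finset.sum_nonneg fun k _ => mul_nonneg (hqnn k) (sq_nonneg _)
    _ = ∑ k ∈ Finset.Icc 1 n, q k * p k ^ 2 := one_mul _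
    _ ≤ ∑ k ∈ Finset.Icc 1 n, a / n * ((k : ℝ) * (q k * p k)) := by
        refine Finset.sum_le_sum fun k hk => ?_
        have h1 := hp k hk
        have h2 := hqnn k
        have h3 := hpnn k
        have h4 : q k * p k * p k ≤ q k * p k * (a * k / n) :=
          mul_le_mul_of_nonneg_left h1 (mul_nonneg h2 h3)
        calc q k * p k ^ 2 = q k * p k * p k := by ring
          _ ≤ q k * p k * (a * k / n) := h4
          _ = a / n * ((k : ℝ) * (q k * p k)) := by ring
    _ = a / n * ∑ k ∈ Finset.Icc 1 n, (k : ℝ) * (q k * p k) :=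
        (Finset.mul_sum _ _ _).symm

/-- **False-discovery bound for BH.**  Let `P_1,…,P_n` be independent `[0,1]`-valued random
variables, `H⁰` the indices whose p-values are super-uniform, `R` the BH rejection count at
level `α`, and `V = |H⁰ ∩ 𝓡|` the number of rejected nulls (index `i` is rejected iff
`P_i ≤ (α/n)R` and `R > 0`).  Then `E[V] ≤ (α/n) Σ_{i∈H⁰} E[R | P_i ∈ 𝓡]`, where a term
with `P(P_i ∈ 𝓡) = 0` contributes `0`. -/
theorem bh_false_discovery_bound
    {Ω : Type*} [MeasurableSpace Ω] (μ : Measure Ω) [IsProbabilityMeasure μ]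
    (n : ℕ) (hn : 0 < n) (a : ℝ) (ha : a ∈ Set.Ioo (0 : ℝ) 1)
    (P : Fin n → Ω → ℝ) (hPmeas : ∀ i, Measurable (P i))
    (hPrange : ∀ i ω, P i ω ∈ Set.Icc (0 : ℝ) 1)
    (hindep : iIndepFun P μ)
    (H0 : Finset (Fin n))
    (hnull : ∀ i ∈ H0, ∀ u ∈ Set.Icc (0 : ℝ) 1, μ {ω | P i ω ≤ u} ≤ ENNReal.ofReal u) :
    ∫ ω, ((H0.filter fun i =>
            P i ω ≤ a / n * bhCount n a (fun j => P j ω)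
              ∧ 0 < bhCount n a (fun j => P j ω)).card : ℝ) ∂μ
      ≤ a / n * ∑ i ∈ H0,
          (∫ ω in {ω | P i ω ≤ a / n * bhCount n a (fun j => P j ω)
              ∧ 0 < bhCount n a (fun j => P j ω)},
            (bhCount n a (fun j => P j ω) : ℝ) ∂μ)
          / (μ {ω | P i ω ≤ a / n * bhCount n a (fun j => P j ω)
              ∧ 0 < bhCount n a (fun j => P j ω)}).toReal := by
  obtain ⟨ha0, ha1⟩ := ha
  set A : Fin n → Set Ω := fun i => {ω | P i ω ≤ a / n * bhCount n a (fun j => P j ω)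
              ∧ 0 < bhCount n a (fun j => P j ω)} with hAdef
  have hRmeas : Measurable fun ω => bhCount n a (fun j => P j ω) :=
    measurable_bhCount.comp (measurable_pi_lambda _ fun j => hPmeas j)
  have hAmeas : ∀ i, MeasurableSet (A i) := by
    intro i
    have h1 : MeasurableSet {ω | P i ω ≤ a / n * (bhCount n a (fun j => P j ω) : ℝ)} :=
      measurableSet_le (hPmeas i)
        (measurable_const.mul (measurable_from_nat.comp hRmeas))
    have h2 : MeasurableSet {ω | 0 < bhCount n a (fun j => P j ω)} :=
      hRmeas measurableSet_Ioi
    have : A i = {ω | P i ω ≤ a / n * (bhCount n a (fun j => P j ω) : ℝ)}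
        ∩ {ω | 0 < bhCount n a (fun j => P j ω)} := rfl
    rw [this]
    exact h1.inter h2
  have hLHS : ∫ ω, ((H0.filter fun i =>
          P i ω ≤ a / n * bhCount n a (fun j => P j ω)
            ∧ 0 < bhCount n a (fun j => P j ω)).card : ℝ) ∂μ
      = ∑ i ∈ H0, (μ (A i)).toReal := by
    have hcard : ∀ ω, ((H0.filter fun i =>
          P i ω ≤ a / n * bhCount n a (fun j => P j ω)
            ∧ 0 < bhCount n a (fun j => P j ω)).card : ℝ)
        = ∑ i ∈ H0, Set.indicator (A i) (fun _ => (1:ℝ)) ω := by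
      intro ω
      rw [Finset.card_filter]
      push_cast
      refine Finset.sum_congr rfl fun i _ => ?_
      rw [Set.indicator_apply]
      rfl
    simp_rw [hcard]
    rw [integral_finset_sum _ (fun i _ => (integrable_const (1:ℝ)).indicator (hAmeas i))]
    refine Finset.sum_congr rfl fun i _ => ?_
    rw [integral_indicator_const (1:ℝ) (hAmeas i), smul_eq_mul, mul_one, measureReal_def]
  rw [hLHS, Finset.mul_sum]
  refine Finset.sum_le_sum fun i hi => ?_
  have key := bh_key μ n hn a ha0 ha1 P hPmeas hPrange hindep i (hnull i hi)
  set t := (μ (A i)).toReal with htdef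
  set I := ∫ ω in A i, (bhCount n a (fun j => P j ω) : ℝ) ∂μ with hIdef
  rcases eq_or_lt_of_le (ENNReal.toReal_nonneg : (0:ℝ) ≤ t) with ht | ht
  · have ht' : t = 0 := ht.symm
    rw [ht', div_zero, mul_zero]
  · have h2 : t ≤ (a / n * I) / t := by
      rw [le_div_iff₀ ht]
      calc t * t = t ^ 2 := by ring
        _ ≤ a / n * I := key
    calc t ≤ (a / n * I) / t := h2
      _ = a / n * (I / t) := by rw [mul_div_assoc]
end

section
/- Monotone convergence of the FDP bound under the alternative update (Algorithm 5): with α_1 = γ_1 α, α_2 = (γ_2 α − α_1)(R_1 + n_2)/n_2, and α_{t+1} = ( R_t (Σ_{i<t} α_i n_i) / ((Σ_{j<t} n_j)(Σ_{k<t} n_k + R_t)) + γ_{t+1} α ) · (Σ_{l≤t} R_l + n_{t+1})/n_{t+1} for t ≥ 2, where γ_2 ≥ γ_1 ≥ 0 and Σγ_t = 1, the quantity Σ_{i=1}^t α_i n_i/(n_i + Σ_{j<t, j≠i} R_j) is at most α Σ_{i=1}^t γ_i ≤ α for every t ≥ 1. -/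
open Finset

/-- Per-term inequality: for `0 ≤ w`, `0 < b ≤ N`, `0 ≤ r`,
`w/(b+r) + w*(1/N - 1/(N+r)) ≤ w/b`. -/
lemma alg5_key_term (w b N r : ℝ) (hw : 0 ≤ w) (hb : 0 < b) (hbN : b ≤ N) (hr : 0 ≤ r) :
    w / (b + r) + w * (1 / N - 1 / (N + r)) ≤ w / b := by
  have hN : 0 < N := lt_of_lt_of_le hb hbN
  have hbr : 0 < b + r := by linarith
  have hNr : 0 < N + r := by linarith
  have e1 : w / b - w / (b + r) = w * r / (b * (b + r)) := by
    field_simp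
    ring
  have e2 : w * (1 / N - 1 / (N + r)) = w * r / (N * (N + r)) := by
    field_simp
    ring
  have h3 : w * r / (N * (N + r)) ≤ w * r / (b * (b + r)) := by
    gcongr
  linarith

/-- **Fact: Algorithm 5 controls the FDP bound.**  With `α_1 = γ_1 α`,
`α_2 = (γ_2 α − α_1)(R_1 + n_2)/n_2`, and for `t ≥ 2`
`α_{t+1} = (R_t (Σ_{i<t} α_i n_i)/((Σ_{j<t} n_j)(Σ_{k<t} n_k + R_t)) + γ_{t+1} α)
 · (Σ_{l≤t} R_l + n_{t+1})/n_{t+1}`,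
where `γ_2 ≥ γ_1 ≥ 0` and `Σγ_t = 1`, the quantity
`Σ_{i=1}^t α_i n_i/(n_i + Σ_{j<t, j≠i} R_j)` is at most `α Σ_{i=1}^t γ_i ≤ α` for all
`t ≥ 1`. -/
theorem algorithm5_fdp_control
    (α : ℝ) (hα : 0 < α)
    (γ : ℕ → ℝ) (hγ : ∀ s, 0 ≤ γ s) (hγ12 : γ 1 ≤ γ 2) (hγsum : ∑' s : ℕ, γ (s + 1) = 1)
    (n : ℕ → ℕ) (hn : ∀ s, 0 < n s)
    (R : ℕ → ℕ) (hR : ∀ s, R s ≤ n s)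
    (a : ℕ → ℝ)
    (ha1 : a 1 = γ 1 * α)
    (ha2 : a 2 = (γ 2 * α - a 1) * (((R 1 : ℝ) + (n 2 : ℝ)) / (n 2 : ℝ)))
    (ha : ∀ t, 2 ≤ t →
      a (t + 1) =
        ((R t : ℝ) * (∑ i ∈ Icc 1 (t - 1), a i * (n i : ℝ))
            / ((∑ j ∈ Icc 1 (t - 1), (n j : ℝ))
                * ((∑ k ∈ Icc 1 (t - 1), (n k : ℝ)) + (R t : ℝ)))
          + γ (t + 1) * α)
          * (((∑ l ∈ Icc 1 t, (R l : ℝ)) + (n (t + 1) : ℝ)) / (n (t + 1) : ℝ))) :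
    ∀ t, 1 ≤ t →
      (∑ i ∈ Icc 1 t,
          a i * ((n i : ℝ) / ((n i : ℝ) + ∑ j ∈ (Icc 1 (t - 1)).erase i, (R j : ℝ)))
        ≤ α * ∑ i ∈ Icc 1 t, γ i)
      ∧ α * ∑ i ∈ Icc 1 t, γ i ≤ α := by
  have hnR : ∀ s, (0:ℝ) < n s := fun s => by exact_mod_cast hn s
  -- γ partial sums are ≤ 1
  have hγsummable : Summable (fun s : ℕ => γ (s + 1)) := by
    by_contra h
    rw [tsum_eq_zero_of_not_summable h] at hγsum
    norm_num at hγsum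
  have hγle : ∀ t : ℕ, ∑ i ∈ Icc 1 t, γ i ≤ 1 := by
    intro t
    have h1 : ∀ m : ℕ, ∑ i ∈ Icc 1 m, γ i = ∑ s ∈ range m, γ (s + 1) := by
      intro m
      induction m with
      | zero => rw [show Finset.Icc 1 0 = ∅ from Finset.Icc_eq_empty (by omega)]; simp
      | succ k ihk =>
        rw [Finset.sum_Icc_succ_top (by omega), Finset.sum_range_succ, ihk]
    rw [h1 t, ← hγsum]
    exact Summable.sum_le_tsum (range t) (fun i _ => hγ _) hγsummable
  -- nonnegativity of a
  have hanneg : ∀ i, 1 ≤ i → 0 ≤ a i := by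
    intro i
    induction i using Nat.strong_induction_on with
    | _ i ih =>
      intro hi
      rcases Nat.lt_or_ge i 3 with h3 | h3
      · interval_cases i
        · rw [ha1]; exact mul_nonneg (hγ 1) hα.le
        · rw [ha2, ha1]
          apply mul_nonneg
          · nlinarith
          · positivity
      · obtain ⟨t, ht, rfl⟩ : ∃ t, 2 ≤ t ∧ i = t + 1 := ⟨i - 1, by omega, by omega⟩
        rw [ha t ht]
        have hs : 0 ≤ ∑ i ∈ Icc 1 (t - 1), a i * (n i : ℝ) := by
          apply Finset.sum_nonneg
          intro j hj
          rw [mem_Icc] at hj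
          exact mul_nonneg (ih j (by omega) hj.1) (Nat.cast_nonneg _)
        have hns : (0:ℝ) ≤ ∑ j ∈ Icc 1 (t - 1), (n j : ℝ) :=
          Finset.sum_nonneg fun j _ => Nat.cast_nonneg _
        apply mul_nonneg
        · apply add_nonneg
          · apply div_nonneg
            · exact mul_nonneg (Nat.cast_nonneg _) hs
            · apply mul_nonneg hns
              exact add_nonneg hns (Nat.cast_nonneg _)
          · exact mul_nonneg (hγ _) hα.le
        · apply div_nonneg _ (Nat.cast_nonneg _)
          apply add_nonneg _ (Nat.cast_nonneg _)
          exact Finset.sum_nonneg fun j _ => Nat.cast_nonneg _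
  -- the main inequality
  have main : ∀ t, 1 ≤ t →
      ∑ i ∈ Icc 1 t,
          a i * ((n i : ℝ) / ((n i : ℝ) + ∑ j ∈ (Icc 1 (t - 1)).erase i, (R j : ℝ)))
        ≤ α * ∑ i ∈ Icc 1 t, γ i := by
    intro t ht
    induction t, ht using Nat.le_induction with
    | base =>
      have h1 : (0:ℝ) < n 1 := hnR 1
      rw [show (1:ℕ) - 1 = 0 from rfl, Finset.Icc_self, Finset.sum_singleton,
        show Finset.Icc 1 0 = (∅ : Finset ℕ) from Finset.Icc_eq_empty (by omega)]
      simp only [Finset.erase_empty, Finset.sum_empty, add_zero]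
      rw [Finset.sum_singleton, div_self h1.ne', mul_one, ha1, mul_comm]
    | succ t ht ih =>
      rcases Nat.lt_or_ge t 2 with ht2 | ht2
      · -- t = 1, prove the case t+1 = 2 directly
        obtain rfl : t = 1 := by omega
        have h2 : (0:ℝ) < n 2 := hnR 2
        have h12 : (0:ℝ) < (n 2 : ℝ) + R 1 := by positivity
        rw [show (1:ℕ) + 1 - 1 = 1 from rfl, show (1:ℕ) + 1 = 2 from rfl,
          show Finset.Icc 1 2 = {1, 2} from rfl, show Finset.Icc 1 1 = {1} from rfl]
        rw [Finset.sum_pair (by omega), Finset.sum_pair (by omega)]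
        have e1 : ({1} : Finset ℕ).erase 1 = ∅ := by decide
        have e2 : ({1} : Finset ℕ).erase 2 = {1} := by decide
        rw [e1, e2, Finset.sum_empty, Finset.sum_singleton, add_zero,
          div_self (hnR 1).ne', mul_one, ha2]
        have hfrac : (((R 1 : ℝ) + (n 2 : ℝ)) / (n 2 : ℝ)) *
            ((n 2 : ℝ) / ((n 2 : ℝ) + (R 1 : ℝ))) = 1 := by
          rw [div_mul_div_comm, div_eq_one_iff_eq (by positivity)]
          ring
        rw [mul_assoc, hfrac, mul_one]
        have := hγ 1
        nlinarith
      · -- t ≥ 2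
        obtain ⟨s, rfl⟩ : ∃ s, t = s + 2 := ⟨t - 2, by omega⟩
        -- notation
        set N : ℝ := ∑ j ∈ Icc 1 (s + 1), (n j : ℝ) with hNdef
        set P : ℝ := ∑ j ∈ Icc 1 (s + 1), (R j : ℝ) with hPdef
        have hN : 0 < N := by
          apply Finset.sum_pos (fun j _ => hnR j)
          exact ⟨1, by simp⟩
        have hr : (0:ℝ) ≤ R (s + 2) := Nat.cast_nonneg _
        have hNr : 0 < N + R (s + 2) := by linarith
        -- rewrite the sum over Icc 1 (s+3)
        have hsub1 : (s + 2 + 1 : ℕ) - 1 = s + 2 := rfl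
        have hsub2 : (s + 2 : ℕ) - 1 = s + 1 := rfl
        rw [hsub1] at *
        rw [hsub2] at ih
        -- split off the top term i = s+3
        rw [Finset.sum_Icc_succ_top (by omega : 1 ≤ s + 2 + 1)]
        rw [Finset.sum_Icc_succ_top (by omega : 1 ≤ s + 2)]
        rw [Finset.sum_Icc_succ_top (by omega : 1 ≤ s + 2)] at ih
        -- the erase sets
        have hE3 : (Icc 1 (s + 2)).erase (s + 2 + 1) = Icc 1 (s + 2) :=
          Finset.erase_eq_of_notMem (by simp)
        have hE2 : (Icc 1 (s + 2)).erase (s + 2) = Icc 1 (s + 1) := by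
          rw [Finset.Icc_erase_right]; exact Finset.Ico_add_one_right_eq_Icc ..
        have hE2' : (Icc 1 (s + 1)).erase (s + 2) = Icc 1 (s + 1) :=
          Finset.erase_eq_of_notMem (by simp)
        rw [hE3, hE2, hE2'] at *
        have hQ : ∑ j ∈ Icc 1 (s + 2), (R j : ℝ) = P + R (s + 2) := by
          rw [Finset.sum_Icc_succ_top (by omega : 1 ≤ s + 2)]
        -- for i ∈ Icc 1 (s+1), the erased sum gains R (s+2)
        have hEi : ∀ i ∈ Icc 1 (s + 1),
            ∑ j ∈ (Icc 1 (s + 2)).erase i, (R j : ℝ)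
              = (∑ j ∈ (Icc 1 (s + 1)).erase i, (R j : ℝ)) + R (s + 2) := by
          intro i hi
          rw [mem_Icc] at hi
          have h1 : Icc 1 (s + 2) = insert (s + 2) (Icc 1 (s + 1)) := by
            ext x; simp only [mem_Icc, mem_insert]; omega
          rw [h1, Finset.erase_insert_of_ne (by omega)]
          rw [Finset.sum_insert (by simp)]
          ring
        -- compute the new top term
        have htop : a (s + 2 + 1) * ((n (s + 2 + 1) : ℝ) /
              ((n (s + 2 + 1) : ℝ) + ∑ j ∈ Icc 1 (s + 2), (R j : ℝ)))
            = (R (s + 2) : ℝ) * (∑ i ∈ Icc 1 (s + 1), a i * (n i : ℝ))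
                / (N * (N + (R (s + 2) : ℝ))) + γ (s + 2 + 1) * α := by
          rw [ha (s + 2) (by omega), hsub2]
          have hn3 : (0:ℝ) < n (s + 2 + 1) := hnR _
          have hQ' : (0:ℝ) ≤ ∑ l ∈ Icc 1 (s + 2), (R l : ℝ) :=
            Finset.sum_nonneg fun j _ => Nat.cast_nonneg _
          have hd : (0:ℝ) < (n (s + 2 + 1) : ℝ) + ∑ j ∈ Icc 1 (s + 2), (R j : ℝ) := by
            linarith
          rw [← hNdef]
          field_simp
          ring
        rw [htop]
        -- the key identity: spread X over the sum
        have hX : (R (s + 2) : ℝ) * (∑ i ∈ Icc 1 (s + 1), a i * (n i : ℝ))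
              / (N * (N + (R (s + 2) : ℝ)))
            = ∑ i ∈ Icc 1 (s + 1), (a i * (n i : ℝ)) *
                (1 / N - 1 / (N + (R (s + 2) : ℝ))) := by
          rw [← Finset.sum_mul]
          field_simp
          ring
        -- the per-term comparison
        have hcomp : ∑ i ∈ Icc 1 (s + 1),
              (a i * ((n i : ℝ) / ((n i : ℝ) + ∑ j ∈ (Icc 1 (s + 2)).erase i, (R j : ℝ)))
                + (a i * (n i : ℝ)) * (1 / N - 1 / (N + (R (s + 2) : ℝ))))
            ≤ ∑ i ∈ Icc 1 (s + 1),
              a i * ((n i : ℝ) / ((n i : ℝ) + ∑ j ∈ (Icc 1 (s + 1)).erase i, (R j : ℝ))) := by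
          apply Finset.sum_le_sum
          intro i hi
          have hi' := hi
          rw [mem_Icc] at hi'
          rw [hEi i hi]
          set E : ℝ := ∑ j ∈ (Icc 1 (s + 1)).erase i, (R j : ℝ) with hEdef
          have hEnn : 0 ≤ E :=
            Finset.sum_nonneg fun j _ => Nat.cast_nonneg _
          have hb : (0:ℝ) < (n i : ℝ) + E := by
            have := hnR i; linarith
          have hbN : (n i : ℝ) + E ≤ N := by
            have h1 : N = (n i : ℝ) + ∑ j ∈ (Icc 1 (s + 1)).erase i, (n j : ℝ) := by
              rw [hNdef, ← Finset.add_sum_erase _ _ hi]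
            have h2 : E ≤ ∑ j ∈ (Icc 1 (s + 1)).erase i, (n j : ℝ) := by
              apply Finset.sum_le_sum
              intro j _
              exact_mod_cast hR j
            linarith
          have hw : 0 ≤ a i * (n i : ℝ) :=
            mul_nonneg (hanneg i hi'.1) (Nat.cast_nonneg _)
          have := alg5_key_term (a i * (n i : ℝ)) ((n i : ℝ) + E) N (R (s + 2)) hw hb hbN hr
          calc a i * ((n i : ℝ) / ((n i : ℝ) + (E + (R (s + 2) : ℝ))))
                + (a i * (n i : ℝ)) * (1 / N - 1 / (N + (R (s + 2) : ℝ)))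
              = (a i * (n i : ℝ)) / (((n i : ℝ) + E) + (R (s + 2) : ℝ))
                + (a i * (n i : ℝ)) * (1 / N - 1 / (N + (R (s + 2) : ℝ))) := by
                rw [mul_div_assoc]; ring_nf
            _ ≤ (a i * (n i : ℝ)) / ((n i : ℝ) + E) := this
            _ = a i * ((n i : ℝ) / ((n i : ℝ) + E)) := by rw [mul_div_assoc]
        -- put it all together
        rw [Finset.sum_Icc_succ_top (by omega : 1 ≤ s + 2 + 1)]
        have hγ3 := hγ (s + 2 + 1)
        have hsum3 : ∑ i ∈ Icc 1 (s + 1),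
              a i * ((n i : ℝ) / ((n i : ℝ) + ∑ j ∈ (Icc 1 (s + 2)).erase i, (R j : ℝ)))
            + (R (s + 2) : ℝ) * (∑ i ∈ Icc 1 (s + 1), a i * (n i : ℝ))
              / (N * (N + (R (s + 2) : ℝ)))
            ≤ ∑ i ∈ Icc 1 (s + 1),
              a i * ((n i : ℝ) / ((n i : ℝ) + ∑ j ∈ (Icc 1 (s + 1)).erase i, (R j : ℝ))) := by
          rw [hX, ← Finset.sum_add_distrib] at *
          exact hcomp
        have hmid : a (s + 2) * ((n (s + 2) : ℝ) / ((n (s + 2) : ℝ) + P)) ≤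
            a (s + 2) * ((n (s + 2) : ℝ) / ((n (s + 2) : ℝ) + P)) := le_refl _
        have hmid' : (Icc 1 (s + 1)).erase (s + 1 + 1) = Icc 1 (s + 1) :=
          Finset.erase_eq_of_notMem (by simp)
        rw [hmid'] at ih
        linarith [ih, hsum3, mul_comm (γ (s + 2 + 1)) α]
  intro t ht
  refine ⟨main t ht, ?_⟩
  calc α * ∑ i ∈ Icc 1 t, γ i ≤ α * 1 := by
        apply mul_le_mul_of_nonneg_left (hγle t) hα.le
    _ = α := mul_one α
end
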